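/- arXiv:math/0205016 — 3 statements merged into one kernel-verified Lean document; each statement's English description precedes it below -/
import Mathlib

section
/- Let x̄ be an asymptotically stable equilibrium of the autonomous system ẋ = f(x, ū), with domain of attraction O, and let K be a compact subset of O. Let u be an input defined on [0,∞) with u(t) → ū as t → ∞, and let x(·) be a solution of ẋ(t) = f(x(t), u(t)) defined on all of [0,∞) which is K-recurrent, i.e. for each T > 0 there is some t > T with x(t) ∈ K. Then x(t) → x̄ as t → ∞. -/
open MeasureTheory Metric Set Filter Topology

/-- `x` is a (Carathéodory) solution of the control system `ẋ = f(x, u)` on the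
time interval `I` (assumed to contain `0`), staying in the open state space `X`:
`x` is continuous on `I`, takes values in `X`, and satisfies the integral
equation `x t = x 0 + ∫₀ᵗ f (x s) (u s) ds` on `I`. -/
def IsSolOn {n : ℕ} {U : Type*} [MetricSpace U]
    (X : Set (EuclideanSpace ℝ (Fin n)))
    (f : EuclideanSpace ℝ (Fin n) → U → EuclideanSpace ℝ (Fin n))
    (u : ℝ → U) (x : ℝ → EuclideanSpace ℝ (Fin n)) (I : Set ℝ) : Prop :=
  ContinuousOn x I ∧ (∀ t ∈ I, x t ∈ X) ∧
  (∀ t ∈ I, IntervalIntegrable (fun s => f (x s) (u s)) volume 0 t) ∧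
  (∀ t ∈ I, x t = x 0 + ∫ s in (0:ℝ)..t, f (x s) (u s))

/-- `u` is an admissible input on `[0,∞)`: it is (a.e. strongly) measurable and
locally essentially bounded, i.e. on each compact subinterval of `[0,∞)` it
takes values, up to a null set, in a compact subset of `U`. -/
def IsInput {U : Type*} [MetricSpace U] (u : ℝ → U) : Prop :=
  AEStronglyMeasurable u (volume.restrict (Ici (0:ℝ))) ∧
  ∀ I₀ : Set ℝ, IsCompact I₀ → I₀ ⊆ Ici 0 →
    ∃ K₀ : Set U, IsCompact K₀ ∧ ∀ᵐ t ∂(volume.restrict I₀), u t ∈ K₀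

/-- The (essential) sup norm `‖u‖ = ess sup_{t ≥ 0} dist (u t) ubar` is `< δ`. -/
def SupNormLt {U : Type*} [MetricSpace U] (u : ℝ → U) (ubar : U) (δ : ℝ) : Prop :=
  ∃ b, b < δ ∧ ∀ᵐ t ∂(volume.restrict (Ici (0:ℝ))), dist (u t) ubar ≤ b

/-!
Near a finite piece of an unperturbed trajectory `y`, every solution that starts close to `y 0`
and is driven by an input close to `ū` stays close to `y`: this is Grönwall's inequality for the
integral equations, combined with a continuity argument that keeps the solution inside a
compact tube around `y` on which `f` is Lipschitz. Covering a compact set of initial states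
attracted to `x̄` by finitely many such windows, inputs close to `ū` steer every solution
starting in it into a given ball around `x̄` within a bounded time. Once `u` is close to `ū`,
this brings `x` from `K` into a small closed ball `B` around `x̄`; applied to `B` itself, whose
unperturbed trajectories remain `ε/2`-close to `x̄` by stability, it shows that `x` returns to
`B` after a time at least `1` without leaving the `ε`-ball in between.
-/

theorem le_gronwallBound_of_le_integral {d : ℝ → ℝ} {a b δ K ε : ℝ} (hK : 0 ≤ K)
    (hd : ContinuousOn d (Icc a b))
    (h : ∀ t ∈ Icc a b, d t ≤ δ + ∫ s in a..t, (K * d s + ε)) :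
    ∀ t ∈ Icc a b, d t ≤ gronwallBound δ K ε (t - a) := by
  rcases lt_or_ge b a with hba | hab
  · simp [Icc_eq_empty_of_lt hba]
  have hg : ContinuousOn (fun s => K * d s + ε) (Icc a b) := by fun_prop
  have hv : ∀ t ∈ Icc a b, δ + ∫ s in a..t, (K * d s + ε) ≤ gronwallBound δ K ε (t - a) := by
    refine le_gronwallBound_of_liminf_deriv_right_le (f' := fun s => K * d s + ε) ?_
      (fun t ht r hr => ?_) (by simp) fun t ht => ?_
    · rw [← uIcc_of_le hab] at hg ⊢
      exact continuousOn_const.add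
        (intervalIntegral.continuousOn_primitive_interval hg.integrableOn_uIcc)
    · have : Fact (t ∈ Icc a b) := ⟨Ico_subset_Icc_self ht⟩
      refine ((HasDerivWithinAt.mono_of_mem_nhdsWithin ?_
        (Icc_mem_nhdsGE_of_mem ht)).const_add δ).liminf_right_slope_le hr
      exact intervalIntegral.integral_hasDerivWithinAt_right
        ((hg.mono (uIcc_subset_Icc (left_mem_Icc.2 hab) this.out)).intervalIntegrable)
        (hg.stronglyMeasurableAtFilter_nhdsWithin measurableSet_Icc t) (hg t this.out)
    · gcongr
      exact h t (Ico_subset_Icc_self ht)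
  exact fun t ht => (h t ht).trans (hv t ht)

theorem ContinuousOn.forall_lt_of_forall_Ico_lt {d : ℝ → ℝ} {a b r : ℝ}
    (hd : ContinuousOn d (Icc a b))
    (h : ∀ t ∈ Icc a b, (∀ s ∈ Ico a t, d s < r) → d t < r) :
    ∀ t ∈ Icc a b, d t < r := by
  by_contra! ⟨t₀, ht₀, hrt₀⟩
  set A := Icc a b ∩ d ⁻¹' Ici r
  have hA : IsClosed A := hd.preimage_isClosed_of_isClosed isClosed_Icc isClosed_Ici
  have hAne : A.Nonempty := ⟨t₀, ht₀, hrt₀⟩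
  have hbdd : BddBelow A := ⟨a, fun t ht => ht.1.1⟩
  have hmem : sInf A ∈ A := hA.csInf_mem hAne hbdd
  refine not_lt_of_ge hmem.2 (h _ hmem.1 fun s hs => not_le.1 fun hrs => ?_)
  exact (csInf_le hbdd ⟨⟨hs.1, hs.2.le.trans hmem.1.2⟩, hrs⟩).not_gt hs.2

theorem norm_le_gronwallBound_of_eq_add_integral {E : Type*} [NormedAddCommGroup E]
    [NormedSpace ℝ E] {z H : ℝ → E} {a b δ L η r : ℝ} (hL : 0 ≤ L) (hη : 0 ≤ η)
    (hz : ContinuousOn z (Icc a b)) (hzH : ∀ t ∈ Icc a b, z t = z a + ∫ s in a..t, H s)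
    (hH : ∀ s ∈ Icc a b, ‖z s‖ < r → ‖H s‖ ≤ L * ‖z s‖ + η)
    (ha : ‖z a‖ ≤ δ) (hr : gronwallBound δ L η (b - a) < r) :
    ∀ t ∈ Icc a b, ‖z t‖ ≤ gronwallBound δ L η (t - a) := by
  have hδ : 0 ≤ δ := (norm_nonneg _).trans ha
  have hz' : ContinuousOn (fun s => ‖z s‖) (Icc a b) := hz.norm
  have hbound : ∀ t ∈ Icc a b, (∀ s ∈ Ico a t, ‖z s‖ < r) →
      ‖z t‖ ≤ gronwallBound δ L η (t - a) := by
    intro t ht hsmall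
    have hsub : Icc a t ⊆ Icc a b := Icc_subset_Icc_right ht.2
    refine le_gronwallBound_of_le_integral hL (hz'.mono hsub) (fun τ hτ => ?_) t
      (right_mem_Icc.2 ht.1)
    have hint : ∀ᵐ s, s ∈ Ioc a τ → ‖H s‖ ≤ L * ‖z s‖ + η := by
      filter_upwards [Measure.ae_ne volume t] with s hst hs
      exact hH s (hsub (Ioc_subset_Icc_self ⟨hs.1, hs.2.trans hτ.2⟩))
        (hsmall s ⟨hs.1.le, lt_of_le_of_ne (hs.2.trans hτ.2) hst⟩)
    calc ‖z τ‖ = ‖z a + ∫ s in a..τ, H s‖ := by rw [← hzH τ (hsub hτ)]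
      _ ≤ ‖z a‖ + ‖∫ s in a..τ, H s‖ := norm_add_le _ _
      _ ≤ δ + ∫ s in a..τ, (L * ‖z s‖ + η) := by
        gcongr
        refine intervalIntegral.norm_integral_le_of_norm_le hτ.1 hint ?_
        refine ContinuousOn.intervalIntegrable ?_
        exact (continuousOn_const.mul hz' |>.add continuousOn_const).mono
          (uIcc_subset_Icc (left_mem_Icc.2 (hτ.1.trans (hsub hτ).2)) (hsub hτ))
  have hgr : ∀ t ∈ Icc a b, gronwallBound δ L η (t - a) < r := fun t ht =>
    (gronwallBound_mono hδ hη hL (by linarith [ht.2])).trans_lt hr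
  have hsmall := hz'.forall_lt_of_forall_Ico_lt fun t ht h => (hbound t ht h).trans_lt (hgr t ht)
  exact fun t ht => hbound t ht fun s hs => hsmall s ⟨hs.1, hs.2.le.trans ht.2⟩

theorem exists_pos_gronwallBound_lt (K T : ℝ) {r : ℝ} (hr : 0 < r) :
    ∃ δ > 0, gronwallBound δ K δ T < r := by
  have hc : Continuous fun δ => gronwallBound δ K δ T := by
    unfold gronwallBound; split_ifs <;> fun_prop
  have h0 : gronwallBound 0 K 0 T = 0 := gronwallBound_ε0_δ0 K T
  obtain ⟨δ, hδr, hδ⟩ := (((hc.tendsto' 0 0 h0).eventually (gt_mem_nhds hr)).filter_mono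
    nhdsWithin_le_nhds |>.and (self_mem_nhdsWithin (s := Ioi (0:ℝ)))).exists
  exact ⟨δ, hδ, hδr⟩

theorem forall_ge_of_forall_exists_ge_one {P Q : ℝ → Prop}
    (hstep : ∀ t, P t → ∃ T ≥ 1, P (t + T) ∧ ∀ τ ∈ Icc t (t + T), Q τ) {t₀ : ℝ} (h₀ : P t₀) :
    ∀ t ≥ t₀, Q t := by
  have key : ∀ n : ℕ, ∀ t, P t → ∀ τ ∈ Icc t (t + n), Q τ := by
    intro n
    induction n with
    | zero =>
      intro t ht τ hτ
      obtain ⟨T, hT, -, hQ⟩ := hstep t ht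
      exact hQ τ ⟨hτ.1, by simp only [CharP.cast_eq_zero, add_zero] at hτ; linarith [hτ.2]⟩
    | succ n ih =>
      intro t ht τ hτ
      obtain ⟨T, hT, hPT, hQ⟩ := hstep t ht
      rcases le_total τ (t + T) with h | h
      · exact hQ τ ⟨hτ.1, h⟩
      · exact ih _ hPT τ ⟨h, by push_cast at hτ; linarith [hτ.2]⟩
  intro t ht
  obtain ⟨n, hn⟩ := exists_nat_ge (t - t₀)
  exact key n t₀ h₀ t ⟨ht, by linarith⟩

theorem IsCompact.eventually_forall_dist_lt {α β γ : Type*} [TopologicalSpace α]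
    [TopologicalSpace β] [PseudoMetricSpace γ] {g : α → β → γ} {C : Set α} {b : β}
    (hC : IsCompact C) (hg : ∀ p ∈ C, ContinuousAt (fun q : α × β => g q.1 q.2) (p, b))
    {η : ℝ} (hη : 0 < η) : ∀ᶠ μ in 𝓝 b, ∀ p ∈ C, dist (g p μ) (g p b) < η := by
  refine hC.eventually_forall_of_forall_eventually fun p hp => ?_
  have h₁ : Tendsto (fun q : β × α => g q.2 q.1) (𝓝 (b, p)) (𝓝 (g p b)) :=
    (hg p hp).tendsto.comp (continuous_swap.tendsto (b, p))
  have h₂ : Tendsto (fun q : β × α => g q.2 b) (𝓝 (b, p)) (𝓝 (g p b)) :=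
    (hg p hp).tendsto.comp ((continuous_snd.prodMk continuous_const).tendsto' _ _ rfl)
  filter_upwards [h₁ (ball_mem_nhds _ (half_pos hη)), h₂ (ball_mem_nhds _ (half_pos hη))]
    with q hq₁ hq₂
  have := dist_triangle_right (g q.2 q.1) (g q.2 b) (g p b)
  rw [mem_preimage, mem_ball] at hq₁ hq₂
  linarith

theorem LocallyLipschitzOn.of_forall_exists_norm_sub_le {E F : Type*}
    [SeminormedAddCommGroup E] [SeminormedAddCommGroup F] {g : E → F} {s : Set E}
    (h : ∀ ξ ∈ s, ∃ V ∈ 𝓝 ξ, ∃ L : ℝ, ∀ x ∈ V, ∀ z ∈ V, ‖g x - g z‖ ≤ L * ‖x - z‖) :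
    LocallyLipschitzOn s g := fun ξ hξ => by
  obtain ⟨V, hV, L, hL⟩ := h ξ hξ
  refine ⟨L.toNNReal, V, mem_nhdsWithin_of_mem_nhds hV,
    LipschitzOnWith.of_dist_le_mul fun x hx z hz => ?_⟩
  simpa only [dist_eq_norm] using (hL x hx z hz).trans
    (mul_le_mul_of_nonneg_right (Real.le_coe_toNNReal L) (norm_nonneg _))

section Solutions

variable {n : ℕ} {U : Type*} [MetricSpace U] {X : Set (EuclideanSpace ℝ (Fin n))}
  {f : EuclideanSpace ℝ (Fin n) → U → EuclideanSpace ℝ (Fin n)} {ubar : U}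

local notation "E" => EuclideanSpace ℝ (Fin n)

theorem IsSolOn.comp_add {u : ℝ → U} {x : ℝ → E} (hx : IsSolOn X f u x (Ici 0)) {t₀ : ℝ}
    (ht₀ : 0 ≤ t₀) : IsSolOn X f (fun s => u (t₀ + s)) (fun s => x (t₀ + s)) (Ici 0) := by
  obtain ⟨hcont, hX, hint, heq⟩ := hx
  have hmem : ∀ s ∈ Ici (0:ℝ), t₀ + s ∈ Ici 0 := fun s hs => add_nonneg ht₀ hs
  have hint' : ∀ s ∈ Ici (0:ℝ),
      IntervalIntegrable (fun σ => f (x σ) (u σ)) volume t₀ (t₀ + s) :=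
    fun s hs => (hint t₀ ht₀).symm.trans (hint _ (hmem s hs))
  refine ⟨hcont.comp (continuous_const_add t₀).continuousOn hmem, fun s hs => hX _ (hmem s hs),
    fun s hs => ?_, fun s hs => ?_⟩
  · simpa using (hint' s hs).comp_add_left t₀
  · simp only [add_zero]
    rw [intervalIntegral.integral_comp_add_left (fun σ => f (x σ) (u σ)), add_zero,
      ← intervalIntegral.integral_interval_sub_left (hint _ (hmem s hs)) (hint t₀ ht₀),
      heq _ (hmem s hs), heq t₀ ht₀]
    abel

theorem IsSolOn.exists_forall_dist_lt (hX : IsOpen X)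
    (hfc : ContinuousOn (fun p : E × U => f p.1 p.2) (X ×ˢ univ))
    (hlip : LocallyLipschitzOn X (f · ubar)) {y : ℝ → E}
    (hy : IsSolOn X f (fun _ => ubar) y (Ici 0)) (T : ℝ) {ε : ℝ} (hε : 0 < ε) :
    ∃ ρ > 0, ∃ W ∈ 𝓝 ubar, ∀ u x, IsSolOn X f u x (Ici 0) → dist (x 0) (y 0) < ρ →
      (∀ s ∈ Icc 0 T, u s ∈ W) → ∀ t ∈ Icc 0 T, dist (x t) (y t) < ε := by
  have hyT : ContinuousOn y (Icc 0 T) := hy.1.mono Icc_subset_Ici_self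
  have hR : IsCompact (y '' Icc 0 T) := isCompact_Icc.image_of_continuousOn hyT
  have hRX : y '' Icc 0 T ⊆ X := image_subset_iff.2 fun s hs => hy.2.1 s hs.1
  obtain ⟨r, hr, hrX⟩ := hR.exists_cthickening_subset_open hX hRX
  have hC : IsCompact (cthickening r (y '' Icc 0 T)) := hR.cthickening
  obtain ⟨L, hL⟩ := (hlip.mono hrX).exists_lipschitzOnWith_of_compact hC
  obtain ⟨η, hη, hgr⟩ := exists_pos_gronwallBound_lt L T (lt_min hr hε)
  have hW := hC.eventually_forall_dist_lt (b := ubar) (fun p hp => hfc.continuousAt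
    (prod_mem_nhds (hX.mem_nhds (hrX hp)) univ_mem)) hη
  refine ⟨η, hη, _, hW, fun u x hx hx0 hu t ht => ?_⟩
  have hdev : ∀ s ∈ Icc 0 T, ‖(x - y) s‖ < min r ε →
      ‖f (x s) (u s) - f (y s) ubar‖ ≤ L * ‖(x - y) s‖ + η := by
    intro s hs hsmall
    have hys : y s ∈ y '' Icc 0 T := mem_image_of_mem y hs
    have hxs : x s ∈ cthickening r (y '' Icc 0 T) :=
      mem_cthickening_of_dist_le _ _ _ _ hys
        (by rw [dist_eq_norm]; exact hsmall.le.trans (min_le_left _ _))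
    calc ‖f (x s) (u s) - f (y s) ubar‖
        ≤ ‖f (x s) (u s) - f (x s) ubar‖ + ‖f (x s) ubar - f (y s) ubar‖ :=
          norm_sub_le_norm_sub_add_norm_sub _ _ _
      _ ≤ η + L * ‖(x - y) s‖ := by
          gcongr
          · rw [← dist_eq_norm]; exact (hu s hs (x s) hxs).le
          · simpa [dist_eq_norm] using hL.dist_le_mul _ hxs _ (self_subset_cthickening _ hys)
      _ = L * ‖(x - y) s‖ + η := add_comm _ _
  have hzH : ∀ s ∈ Icc 0 T, (x - y) s = (x - y) 0 +
      ∫ σ in (0:ℝ)..s, (f (x σ) (u σ) - f (y σ) ubar) := by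
    intro s hs
    rw [intervalIntegral.integral_sub (hx.2.2.1 s hs.1) (hy.2.2.1 s hs.1), Pi.sub_apply,
      Pi.sub_apply, hx.2.2.2 s hs.1, hy.2.2.2 s hs.1]
    abel
  have := norm_le_gronwallBound_of_eq_add_integral L.coe_nonneg hη.le
    (hx.1.mono Icc_subset_Ici_self |>.sub hyT) hzH hdev (by simpa [dist_eq_norm] using hx0.le)
    (by simpa using hgr) t ht
  rw [dist_eq_norm]
  calc ‖x t - y t‖ ≤ gronwallBound η L η (t - 0) := this
    _ ≤ gronwallBound η L η T := gronwallBound_mono hη.le hη.le L.coe_nonneg (by linarith [ht.2])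
    _ < min r ε := hgr
    _ ≤ ε := min_le_right _ _

theorem IsSolOn.eqOn_of_apply_zero_eq (hX : IsOpen X)
    (hfc : ContinuousOn (fun p : E × U => f p.1 p.2) (X ×ˢ univ))
    (hlip : LocallyLipschitzOn X (f · ubar)) {y₁ y₂ : ℝ → E}
    (h₁ : IsSolOn X f (fun _ => ubar) y₁ (Ici 0)) (h₂ : IsSolOn X f (fun _ => ubar) y₂ (Ici 0))
    (h0 : y₁ 0 = y₂ 0) : EqOn y₁ y₂ (Ici 0) := by
  intro t ht
  refine dist_le_zero.1 (le_of_forall_pos_lt_add fun ε hε => ?_)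
  obtain ⟨ρ, hρ, W, hW, hclose⟩ := h₂.exists_forall_dist_lt hX hfc hlip t hε
  simpa using hclose _ _ h₁ (by simpa [h0] using hρ) (fun _ _ => mem_of_mem_nhds hW) t ⟨ht, le_rfl⟩

theorem IsCompact.exists_forall_solution_reaches_ball (hX : IsOpen X)
    (hfc : ContinuousOn (fun p : E × U => f p.1 p.2) (X ×ˢ univ))
    (hlip : LocallyLipschitzOn X (f · ubar)) {C G : Set E} {xbar : E} (hC : IsCompact C)
    (hCG : ∀ ξ ∈ C, ∃ y, IsSolOn X f (fun _ => ubar) y (Ici 0) ∧ y 0 = ξ ∧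
      Tendsto y atTop (𝓝 xbar) ∧ ∀ t ≥ (0:ℝ), y t ∈ G)
    {ε : ℝ} (hε : 0 < ε) :
    ∃ W ∈ 𝓝 ubar, ∃ Tmax, ∀ u x t₀, IsSolOn X f u x (Ici 0) → 0 ≤ t₀ → x t₀ ∈ C →
      (∀ s ∈ Icc t₀ (t₀ + Tmax), u s ∈ W) →
      ∃ T ≥ 1, dist (x (t₀ + T)) xbar < ε ∧ ∀ t ∈ Icc t₀ (t₀ + T), x t ∈ thickening ε G := by
  choose! y hy hy0 hylim hyG using hCG
  have hreach : ∀ ξ ∈ C, ∃ T ≥ 1, dist (y ξ T) xbar < ε / 2 := fun ξ hξ =>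
    (((hylim ξ hξ).eventually (ball_mem_nhds xbar (half_pos hε))).and
      (eventually_ge_atTop 1)).exists.imp fun T hT => ⟨hT.2, hT.1⟩
  choose! T hT1 hTy using hreach
  choose! ρ hρ W hW hclose using fun ξ hξ =>
    (hy ξ hξ).exists_forall_dist_lt hX hfc hlip (T ξ) (half_pos hε)
  obtain ⟨I, hIC, hcover⟩ := hC.elim_nhds_subcover (fun ξ => ball ξ (ρ ξ))
    fun ξ hξ => ball_mem_nhds ξ (hρ ξ hξ)
  refine ⟨⋂ ξ ∈ I, W ξ, (biInter_finset_mem I).2 fun ξ hξ => hW ξ (hIC ξ hξ), ∑ ξ ∈ I, T ξ,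
    fun u x t₀ hx ht₀ hxC hu => ?_⟩
  obtain ⟨ξ, hξI, hxξ⟩ := mem_iUnion₂.1 (hcover hxC)
  have hξ := hIC ξ hξI
  have hTle : T ξ ≤ ∑ ξ ∈ I, T ξ :=
    Finset.single_le_sum (fun ζ hζ => zero_le_one.trans (hT1 ζ (hIC ζ hζ))) hξI
  have hdev := hclose ξ hξ _ _ (hx.comp_add ht₀) (by simpa [hy0 ξ hξ] using hxξ)
    fun s hs => mem_iInter₂.1 (hu (t₀ + s) ⟨by linarith [hs.1], by linarith [hs.2]⟩) ξ hξI
  refine ⟨T ξ, hT1 ξ hξ, ?_, fun t ht => ?_⟩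
  · calc dist (x (t₀ + T ξ)) xbar ≤ dist (x (t₀ + T ξ)) (y ξ (T ξ)) + dist (y ξ (T ξ)) xbar :=
          dist_triangle _ _ _
      _ < ε / 2 + ε / 2 :=
          add_lt_add (hdev (T ξ) ⟨by linarith [hT1 ξ hξ], le_rfl⟩) (hTy ξ hξ)
      _ = ε := add_halves ε
  · have hdevt := hdev (t - t₀) ⟨by linarith [ht.1], by linarith [ht.2]⟩
    rw [add_sub_cancel] at hdevt
    exact mem_thickening_iff.2 ⟨y ξ (t - t₀), hyG ξ hξ _ (by linarith [ht.1]),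
      hdevt.trans (half_lt_self hε)⟩

theorem eventually_exists_solution_tendsto_forall_mem_ball (hX : IsOpen X)
    (hfc : ContinuousOn (fun p : E × U => f p.1 p.2) (X ×ˢ univ))
    (hlip : LocallyLipschitzOn X (f · ubar)) {xbar : E}
    (hstab : ∀ ε > 0, ∃ δ > 0, ∀ ξ ∈ X, dist ξ xbar ≤ δ →
      ∃ y, IsSolOn X f (fun _ => ubar) y (Ici 0) ∧ y 0 = ξ ∧
        ∀ t ≥ (0:ℝ), dist (y t) xbar < ε)
    (hattr : ∀ᶠ ξ in 𝓝 xbar, ∃ y, IsSolOn X f (fun _ => ubar) y (Ici 0) ∧ y 0 = ξ ∧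
      Tendsto y atTop (𝓝 xbar))
    {ε : ℝ} (hε : 0 < ε) :
    ∀ᶠ ξ in 𝓝 xbar, ∃ y, IsSolOn X f (fun _ => ubar) y (Ici 0) ∧ y 0 = ξ ∧
      Tendsto y atTop (𝓝 xbar) ∧ ∀ t ≥ (0:ℝ), y t ∈ ball xbar ε := by
  obtain ⟨δ, hδ, hstable⟩ := hstab ε hε
  filter_upwards [hattr, closedBall_mem_nhds xbar hδ] with ξ ⟨y, hy, hy0, hylim⟩ hξ
  obtain ⟨z, hz, hz0, hzε⟩ := hstable ξ (hy0 ▸ hy.2.1 0 self_mem_Ici) hξ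
  have hyz := hy.eqOn_of_apply_zero_eq hX hfc hlip hz (hy0.trans hz0.symm)
  exact ⟨y, hy, hy0, hylim, fun t ht => (hyz ht).symm ▸ hzε t ht⟩

end Solutions

theorem cics_convergence_general {n : ℕ} {U : Type*} [MetricSpace U]
    (X : Set (EuclideanSpace ℝ (Fin n)))
    (f : EuclideanSpace ℝ (Fin n) → U → EuclideanSpace ℝ (Fin n))
    (xbar : EuclideanSpace ℝ (Fin n)) (ubar : U)
    (O : Set (EuclideanSpace ℝ (Fin n)))
    -- the state space is open, contains the equilibrium, and `f(x̄, ū) = 0`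
    (hX : IsOpen X)
    -- `f` is continuous, and locally Lipschitz in `x` uniformly on compacts of `U`
    (hfc : ContinuousOn (fun p : EuclideanSpace ℝ (Fin n) × U => f p.1 p.2)
      (X ×ˢ (univ : Set U)))
    (hflip : ∀ ξ ∈ X, ∀ K₀ : Set U, IsCompact K₀ → ∃ V ∈ 𝓝 ξ, ∃ L : ℝ,
      ∀ x ∈ V, ∀ z ∈ V, ∀ μ ∈ K₀, ‖f x μ - f z μ‖ ≤ L * ‖x - z‖)
    -- `x̄` is a stable equilibrium of `ẋ = f(x, ū)` ...
    (hstab : ∀ ε > 0, ∃ δ > 0, ∀ ξ ∈ X, dist ξ xbar ≤ δ →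
      ∃ y, IsSolOn X f (fun _ => ubar) y (Ici 0) ∧ y 0 = ξ ∧
        ∀ t ≥ (0:ℝ), dist (y t) xbar < ε)
    -- ... whose domain of attraction is `O`, a neighborhood of `x̄`
    (hO : O = {ξ | ∃ y, IsSolOn X f (fun _ => ubar) y (Ici 0) ∧ y 0 = ξ ∧
      Tendsto y atTop (𝓝 xbar)})
    (hOnhd : O ∈ 𝓝 xbar)
    (K : Set (EuclideanSpace ℝ (Fin n))) (hK : IsCompact K) (hKO : K ⊆ O)
    (u : ℝ → U) (hulim : Tendsto u atTop (𝓝 ubar))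
    (x : ℝ → EuclideanSpace ℝ (Fin n)) (hx : IsSolOn X f u x (Ici 0))
    (hrec : ∀ T > (0:ℝ), ∃ t > T, x t ∈ K) :
    Tendsto x atTop (𝓝 xbar) := by
  subst hO
  have hlip : LocallyLipschitzOn X (f · ubar) :=
    .of_forall_exists_norm_sub_le fun ξ hξ => (hflip ξ hξ {ubar} isCompact_singleton).imp
      fun _ ⟨hV, L, hL⟩ => ⟨hV, L, fun a ha z hz => hL a ha z hz ubar rfl⟩
  refine Metric.tendsto_nhds.2 fun ε hε => ?_
  obtain ⟨δ, hδ, hball⟩ := nhds_basis_closedBall.mem_iff.1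
    (eventually_exists_solution_tendsto_forall_mem_ball hX hfc hlip hstab hOnhd (half_pos hε))
  obtain ⟨δ', hδ', hδ'δ, hδ'ε⟩ : ∃ δ' > 0, δ' ≤ δ ∧ δ' ≤ ε / 2 :=
    ⟨min δ (ε / 2), lt_min hδ (half_pos hε), min_le_left _ _, min_le_right _ _⟩
  obtain ⟨W₁, hW₁, T₁, htrap⟩ :=
    (isCompact_closedBall xbar δ').exists_forall_solution_reaches_ball hX hfc hlip
      (fun ξ hξ => hball (closedBall_subset_closedBall hδ'δ hξ)) hδ'
  obtain ⟨W₂, hW₂, T₂, hentry⟩ := hK.exists_forall_solution_reaches_ball (G := univ) hX hfc hlip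
    (fun ξ hξ => (hKO hξ).imp fun y hy => ⟨hy.1, hy.2.1, hy.2.2, fun _ _ => trivial⟩) hδ'
  obtain ⟨S, hS⟩ := eventually_atTop.1
    ((hulim.eventually (inter_mem hW₁ hW₂)).and (eventually_ge_atTop 0))
  obtain ⟨t₀, ht₀, hxK⟩ := hrec (max S 1) (by positivity)
  obtain ⟨T, hT, hxT, -⟩ := hentry u x t₀ hx (hS t₀ (by linarith [le_max_left S 1])).2 hxK
    fun s hs => (hS s (by linarith [le_max_left S 1, hs.1])).1.2
  refine eventually_atTop.2 ⟨t₀ + T, forall_ge_of_forall_exists_ge_one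
    (P := fun t => S ≤ t ∧ dist (x t) xbar < δ') (fun t ⟨hSt, hxt⟩ => ?_)
    ⟨by linarith [le_max_left S 1], hxT⟩⟩
  obtain ⟨T', hT', hxT', hstay⟩ := htrap u x t hx (hS t hSt).2 (mem_closedBall.2 hxt.le)
    fun s hs => (hS s (hSt.trans hs.1)).1.1
  refine ⟨T', hT', ⟨by linarith, hxT'⟩, fun τ hτ => ?_⟩
  have := mem_ball.1 (thickening_ball xbar δ' (ε / 2) (hstay τ hτ))
  linarith

/-- **Theorem 1 (convergence part).** If `x̄` is an asymptotically stable
equilibrium of `ẋ = f(x, ū)` with domain of attraction `O`, `K ⊆ O` is compact,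
`u` is an input with `u(t) → ū`, and `x(·)` is a `K`-recurrent solution of
`ẋ = f(x, u)` on `[0,∞)`, then `x(t) → x̄` as `t → ∞`. -/
theorem cics_convergence {n : ℕ} {U : Type*} [MetricSpace U]
    (X : Set (EuclideanSpace ℝ (Fin n)))
    (f : EuclideanSpace ℝ (Fin n) → U → EuclideanSpace ℝ (Fin n))
    (xbar : EuclideanSpace ℝ (Fin n)) (ubar : U)
    (O : Set (EuclideanSpace ℝ (Fin n)))
    -- the state space is open, contains the equilibrium, and `f(x̄, ū) = 0`
    (hX : IsOpen X) (hxbar : xbar ∈ X) (heq : f xbar ubar = 0)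
    -- `f` is continuous, and locally Lipschitz in `x` uniformly on compacts of `U`
    (hfc : ContinuousOn (fun p : EuclideanSpace ℝ (Fin n) × U => f p.1 p.2)
      (X ×ˢ (univ : Set U)))
    (hflip : ∀ ξ ∈ X, ∀ K₀ : Set U, IsCompact K₀ → ∃ V ∈ 𝓝 ξ, ∃ L : ℝ,
      ∀ x ∈ V, ∀ z ∈ V, ∀ μ ∈ K₀, ‖f x μ - f z μ‖ ≤ L * ‖x - z‖)
    -- `x̄` is a stable equilibrium of `ẋ = f(x, ū)` ...
    (hstab : ∀ ε > 0, ∃ δ > 0, ∀ ξ ∈ X, dist ξ xbar ≤ δ →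
      ∃ y, IsSolOn X f (fun _ => ubar) y (Ici 0) ∧ y 0 = ξ ∧
        ∀ t ≥ (0:ℝ), dist (y t) xbar < ε)
    -- ... whose domain of attraction is `O`, a neighborhood of `x̄`
    (hO : O = {ξ | ∃ y, IsSolOn X f (fun _ => ubar) y (Ici 0) ∧ y 0 = ξ ∧
      Tendsto y atTop (𝓝 xbar)})
    (hOnhd : O ∈ 𝓝 xbar)
    (K : Set (EuclideanSpace ℝ (Fin n))) (hK : IsCompact K) (hKO : K ⊆ O)
    (u : ℝ → U) (hu : IsInput u) (hulim : Tendsto u atTop (𝓝 ubar))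
    (x : ℝ → EuclideanSpace ℝ (Fin n)) (hx : IsSolOn X f u x (Ici 0))
    (hrec : ∀ T > (0:ℝ), ∃ t > T, x t ∈ K) :
    Tendsto x atTop (𝓝 xbar) :=
  cics_convergence_general X f xbar ubar O hX hfc hflip hstab hO hOnhd K hK hKO u hulim x hx hrec
end

section
/- Let x̄ be an asymptotically stable equilibrium of the autonomous system ẋ = f(x, ū), with domain of attraction O. Then for each ε > 0 there is some δ > 0 such that, whenever |ξ| < δ and u is an input defined on [0,∞) with ‖u‖ < δ, the solution x(t) = φ(t, ξ, u) exists for all t ≥ 0 and satisfies |x(t)| < ε for all t ≥ 0. -/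
open MeasureTheory Metric Set Filter Topology
open scoped NNReal

section Retraction

variable {E : Type*} [NormedAddCommGroup E] [NormedSpace ℝ E]

noncomputable def ballRetraction (c : E) (r : ℝ) (x : E) : E :=
  c + (r / max ‖x - c‖ r) • (x - c)

lemma norm_div_max_smul_sub_le {r : ℝ} (hr : 0 < r) (v w : E) :
    ‖(r / max ‖v‖ r) • v - (r / max ‖w‖ r) • w‖ ≤ 2 * ‖v - w‖ := by
  wlog hvw : ‖w‖ ≤ ‖v‖ generalizing v w
  · rw [norm_sub_rev v w, norm_sub_rev]
    exact this w v (le_of_not_ge hvw)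
  set s := r / max ‖v‖ r
  set s' := r / max ‖w‖ r
  have hs : 0 ≤ s := by positivity
  have hs1 : s ≤ 1 := div_le_one_of_le₀ (le_max_right _ _) (by positivity)
  have hss' : s ≤ s' := div_le_div_of_nonneg_left hr.le (lt_max_of_lt_right hr)
    (max_le_max_right r hvw)
  have hmono : s' * ‖w‖ ≤ s * ‖v‖ := by
    have hmin : ∀ a : ℝ, r / max a r * a = min a r := fun a => by
      rw [div_mul_eq_mul_div, div_eq_iff (lt_max_of_lt_right hr).ne', mul_comm r, min_mul_max]
    rw [hmin, hmin]
    exact min_le_min_right r hvw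
  calc ‖s • v - s' • w‖ = ‖s • (v - w) - (s' - s) • w‖ := by
        congr 1; rw [smul_sub, sub_smul]; abel
    _ ≤ s * ‖v - w‖ + (s' - s) * ‖w‖ := by
        refine (norm_sub_le _ _).trans ?_
        rw [norm_smul, norm_smul, Real.norm_of_nonneg hs, Real.norm_of_nonneg (by linarith)]
    _ ≤ s * ‖v - w‖ + s * (‖v‖ - ‖w‖) := by linarith
    _ ≤ s * ‖v - w‖ + s * ‖v - w‖ := by gcongr; exact norm_sub_norm_le v w
    _ ≤ 2 * ‖v - w‖ := by nlinarith [norm_nonneg (v - w)]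

variable {c : E} {r : ℝ}

lemma lipschitzWith_ballRetraction (hr : 0 < r) : LipschitzWith 2 (ballRetraction c r) := by
  refine lipschitzWith_iff_norm_sub_le.2 fun x z => ?_
  simpa [ballRetraction] using norm_div_max_smul_sub_le hr (x - c) (z - c)

lemma ballRetraction_mem_closedBall (hr : 0 < r) (x : E) :
    ballRetraction c r x ∈ closedBall c r := by
  rw [mem_closedBall, dist_eq_norm, ballRetraction, add_sub_cancel_left, norm_smul,
    Real.norm_of_nonneg (by positivity), div_mul_eq_mul_div,
    div_le_iff₀ (lt_max_of_lt_right hr)]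
  exact mul_le_mul_of_nonneg_left (le_max_left _ _) hr.le

lemma ballRetraction_of_mem (hr : 0 < r) {x : E} (hx : x ∈ closedBall c r) :
    ballRetraction c r x = x := by
  rw [mem_closedBall, dist_eq_norm] at hx
  rw [ballRetraction, max_eq_right hx, div_self hr.ne', one_smul, add_sub_cancel]

end Retraction

section LocallyUniformlyLipschitz

variable {E : Type*} [NormedAddCommGroup E] {U : Type*} [TopologicalSpace U]

def LocallyUniformlyLipschitzOn (X : Set E) (f : E → U → E) : Prop :=
  ∀ ξ ∈ X, ∀ K₀ : Set U, IsCompact K₀ → ∃ V ∈ 𝓝 ξ, ∃ L : ℝ,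
    ∀ x ∈ V, ∀ z ∈ V, ∀ μ ∈ K₀, ‖f x μ - f z μ‖ ≤ L * ‖x - z‖

lemma LocallyUniformlyLipschitzOn.exists_lipschitzOnWith {X C : Set E} {f : E → U → E}
    (hflip : LocallyUniformlyLipschitzOn X f) (hfc : ContinuousOn (Function.uncurry f) (X ×ˢ univ))
    (hC : IsCompact C) (hCX : C ⊆ X) {K₀ : Set U} (hK₀ : IsCompact K₀) :
    ∃ L : ℝ≥0, ∀ μ ∈ K₀, LipschitzOnWith L (f · μ) C := by
  choose! V hV L hL using fun ξ hξ => hflip ξ hξ K₀ hK₀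
  obtain ⟨t, htC, hcover⟩ := hC.elim_nhds_subcover (interior ∘ V)
    fun ξ hξ => interior_mem_nhds.2 (hV ξ (hCX hξ))
  obtain ⟨δ, hδ, hball⟩ := lebesgue_number_lemma_of_metric (c := fun ξ : t => interior (V ξ)) hC
    (fun _ => isOpen_interior) (by simpa [Set.iUnion_subtype] using hcover)
  obtain ⟨M, hM⟩ := (hC.prod hK₀).exists_bound_of_continuousOn
    (hfc.mono (prod_mono hCX (subset_univ _)))
  refine ⟨(∑ ξ ∈ t, |L ξ| + 2 * |M| / δ).toNNReal, fun μ hμ => ?_⟩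
  refine LipschitzOnWith.of_dist_le_mul fun x hx z hz => ?_
  rw [dist_eq_norm, dist_eq_norm, Real.coe_toNNReal _ (by positivity)]
  -- `δ` is a Lebesgue number of the cover by Lipschitz neighbourhoods; farther apart, use `M`
  by_cases hxz : ‖x - z‖ < δ
  · obtain ⟨⟨ξ, hξt⟩, hξ⟩ := hball x hx
    have hxV : x ∈ V ξ := interior_subset (hξ (mem_ball_self hδ))
    have hzV : z ∈ V ξ := interior_subset (hξ (by rwa [mem_ball, dist_eq_norm, norm_sub_rev]))
    calc ‖f x μ - f z μ‖ ≤ L ξ * ‖x - z‖ := hL ξ (hCX (htC ξ hξt)) x hxV z hzV μ hμ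
      _ ≤ (∑ ξ ∈ t, |L ξ| + 2 * |M| / δ) * ‖x - z‖ := by
        gcongr
        exact (le_abs_self _).trans ((Finset.single_le_sum (fun ξ _ => abs_nonneg (L ξ)) hξt).trans
          (le_add_of_nonneg_right (by positivity)))
  · push Not at hxz
    calc ‖f x μ - f z μ‖ ≤ ‖f x μ‖ + ‖f z μ‖ := norm_sub_le _ _
      _ ≤ 2 * |M| / δ * δ := by
        have hxM : ‖f x μ‖ ≤ M := hM (x, μ) ⟨hx, hμ⟩
        have hzM : ‖f z μ‖ ≤ M := hM (z, μ) ⟨hz, hμ⟩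
        rw [div_mul_cancel₀ _ hδ.ne']
        linarith [le_abs_self M]
      _ ≤ (∑ ξ ∈ t, |L ξ| + 2 * |M| / δ) * ‖x - z‖ := by
        gcongr
        exact le_add_of_nonneg_left (Finset.sum_nonneg fun ξ _ => abs_nonneg _)

end LocallyUniformlyLipschitz

section Integral

variable {E : Type*} [NormedAddCommGroup E] [NormedSpace ℝ E]

theorem norm_le_gronwallBound_of_eq_add_integral_s1 {v w : ℝ → E} {a b L η : ℝ}
    (hv : ContinuousOn v (Icc a b)) (hw : ∀ t ∈ Icc a b, IntervalIntegrable w volume a t)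
    (hvw : ∀ t ∈ Icc a b, v t = v a + ∫ s in a..t, w s)
    (hbound : ∀ᵐ s ∂volume.restrict (Icc a b), ‖w s‖ ≤ L * ‖v s‖ + η) :
    ∀ t ∈ Icc a b, ‖v t‖ ≤ gronwallBound ‖v a‖ L η (t - a) := by
  refine le_gronwallBound_of_liminf_deriv_right_le hv.norm (f' := fun t => L * ‖v t‖ + η)
    (fun t ht r hr => ?_) le_rfl fun _ _ => le_rfl
  have htI : t ∈ Icc a b := Ico_subset_Icc_self ht
  obtain ⟨r', hr', hr'r⟩ := exists_between hr
  -- near `t` the bound on `‖w‖` is below `r'`, so the slope of `‖v‖` is at most `r'`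
  have hnear : ∀ᶠ s in 𝓝[Icc a b] t, L * ‖v s‖ + η < r' :=
    ((hv.norm.const_smul L).add continuousOn_const).continuousWithinAt htI
      |>.eventually_lt continuousWithinAt_const hr'
  obtain ⟨h, hh, hball⟩ := Metric.mem_nhdsWithin_iff.1 hnear
  refine Filter.Eventually.frequently ?_
  filter_upwards [Ioo_mem_nhdsGT (lt_min (lt_add_of_pos_right t hh) ht.2)] with z hz
  have hzI : Icc t z ⊆ Icc a b := Icc_subset_Icc ht.1 (hz.2.le.trans (min_le_right _ _))
  have hwz : ∀ᵐ s ∂volume, s ∈ Ioc t z → ‖w s‖ ≤ r' := by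
    rw [← ae_restrict_iff' measurableSet_Ioc]
    filter_upwards [ae_restrict_of_ae_restrict_of_subset (Ioc_subset_Icc_self.trans hzI) hbound,
      ae_restrict_mem measurableSet_Ioc] with s hs hsz
    refine hs.trans (hball ⟨?_, hzI (Ioc_subset_Icc_self hsz)⟩).le
    rw [mem_ball, Real.dist_eq, abs_of_pos (sub_pos.2 hsz.1)]
    linarith [hsz.2, hz.2.trans_le (min_le_left _ _)]
  have hdiff : v z - v t = ∫ s in t..z, w s := by
    rw [hvw z (hzI ⟨hz.1.le, le_rfl⟩), hvw t htI,
      ← intervalIntegral.integral_interval_sub_left (hw z (hzI ⟨hz.1.le, le_rfl⟩)) (hw t htI)]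
    abel
  have hslope : ‖v z‖ - ‖v t‖ ≤ r' * (z - t) := by
    refine (norm_sub_norm_le _ _).trans ?_
    rw [hdiff]
    simpa [mul_comm] using intervalIntegral.norm_integral_le_of_norm_le hz.1.le hwz
      intervalIntegrable_const
  rw [inv_mul_lt_iff₀ (sub_pos.2 hz.1)]
  nlinarith [hz.1]

lemma norm_integral_le_pow_div_factorial {w : ℝ → E} {t L D : ℝ} {k : ℕ} (ht : 0 ≤ t)
    (hw : ∀ᵐ s, s ∈ Ioc 0 t → ‖w s‖ ≤ L * ((L * s) ^ k / k.factorial * D)) :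
    ‖∫ s in 0..t, w s‖ ≤ (L * t) ^ (k + 1) / (k + 1).factorial * D := by
  have hcont : Continuous fun s : ℝ => L * ((L * s) ^ k / k.factorial * D) := by fun_prop
  refine (intervalIntegral.norm_integral_le_of_norm_le ht hw
    (hcont.intervalIntegrable _ _)).trans_eq ?_
  have hpow : (fun s : ℝ => L * ((L * s) ^ k / k.factorial * D)) =
      fun s => L ^ (k + 1) * D / k.factorial * s ^ k := by
    ext s; ring
  rw [hpow, intervalIntegral.integral_const_mul, integral_pow, Nat.factorial_succ]
  push_cast
  field_simp
  ring

lemma norm_integral_sub_le_pow_div_factorial {U : Type*} {F : E → U → E} {K₀ : Set U} {L : ℝ≥0}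
    (hL : ∀ μ ∈ K₀, LipschitzWith L (F · μ)) {u : ℝ → U} {t : ℝ} (ht : 0 ≤ t)
    (huK : ∀ᵐ s, s ∈ Ioc 0 t → u s ∈ K₀) {Y Z : ℝ → E}
    (hY : IntervalIntegrable (fun s => F (Y s) (u s)) volume 0 t)
    (hZ : IntervalIntegrable (fun s => F (Z s) (u s)) volume 0 t) {k : ℕ} {D : ℝ}
    (hYZ : ∀ s ∈ Ioc 0 t, ‖Y s - Z s‖ ≤ (L * s) ^ k / k.factorial * D) :
    ‖(∫ s in 0..t, F (Y s) (u s)) - ∫ s in 0..t, F (Z s) (u s)‖ ≤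
      (L * t) ^ (k + 1) / (k + 1).factorial * D := by
  rw [← intervalIntegral.integral_sub hY hZ]
  refine norm_integral_le_pow_div_factorial ht ?_
  filter_upwards [huK] with s hs hst
  exact ((hL _ (hs hst)).norm_sub_le _ _).trans (mul_le_mul_of_nonneg_left (hYZ s hst) L.2)

end Integral

lemma intervalIntegrable_comp_of_isCompact {E U : Type*} [NormedAddCommGroup E] [MetricSpace U]
    {F : E → U → E} (hF : Continuous (Function.uncurry F))
    {Y : ℝ → E} {u : ℝ → U} {a b : ℝ} (hab : a ≤ b) (hY : ContinuousOn Y (Icc a b))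
    (hu : AEStronglyMeasurable u (volume.restrict (Icc a b))) {K₀ : Set U} (hK₀ : IsCompact K₀)
    (huK : ∀ᵐ s ∂volume.restrict (Icc a b), u s ∈ K₀) :
    IntervalIntegrable (fun s => F (Y s) (u s)) volume a b := by
  obtain ⟨M, hM⟩ := ((isCompact_Icc.image_of_continuousOn hY).prod hK₀).exists_bound_of_continuousOn
    hF.continuousOn
  refine IntegrableOn.intervalIntegrable ?_
  rw [uIcc_of_le hab]
  refine Integrable.mono' (integrableOn_const (C := M) measure_Icc_lt_top.ne)
    (hF.comp_aestronglyMeasurable ((hY.aestronglyMeasurable measurableSet_Icc).prodMk hu)) ?_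
  filter_upwards [huK, ae_restrict_mem measurableSet_Icc] with s hs hsI
  exact hM (Y s, u s) ⟨mem_image_of_mem Y hsI, hs⟩

lemma ContinuousMap.exists_isFixedPt_of_norm_iterate_le {E : Type*} [NormedAddCommGroup E]
    [CompleteSpace E] {c L : ℝ} (hc : 0 ≤ c) (hL : 0 ≤ L) {Φ : C(Icc 0 c, E) → C(Icc 0 c, E)}
    (h : ∀ k y z (t : Icc 0 c),
      ‖(Φ^[k] y) t - (Φ^[k] z) t‖ ≤ (L * t) ^ k / k.factorial * dist y z) :
    ∃ y, Function.IsFixedPt Φ y := by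
  have hdist : ∀ k y z, dist (Φ^[k] y) (Φ^[k] z) ≤ (L * c) ^ k / k.factorial * dist y z :=
    fun k y z => (ContinuousMap.dist_le (by positivity)).2 fun t => by
      rw [dist_eq_norm]
      refine (h k y z t).trans ?_
      have := t.2
      gcongr
      exacts [mul_nonneg hL this.1, this.2]
  obtain ⟨k, hk⟩ := ((FloorSemiring.tendsto_pow_div_factorial_atTop (L * c)).eventually
    (gt_mem_nhds zero_lt_one)).exists
  have hcontr : ContractingWith ((L * c) ^ k / k.factorial).toNNReal Φ^[k] :=
    ⟨Real.toNNReal_lt_one.2 hk, LipschitzWith.of_dist_le_mul fun y z =>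
      (hdist k y z).trans (mul_le_mul_of_nonneg_right (Real.le_coe_toNNReal _) dist_nonneg)⟩
  exact ⟨_, hcontr.isFixedPt_fixedPoint_iterate⟩

lemma ae_restrict_Ici_comp_add_right {p : ℝ → Prop} {a : ℝ} (ha : 0 ≤ a)
    (h : ∀ᵐ t ∂volume.restrict (Ici 0), p t) : ∀ᵐ t ∂volume.restrict (Ici 0), p (t + a) := by
  rw [ae_restrict_iff' measurableSet_Ici] at h ⊢
  filter_upwards [(measurePreserving_add_right volume a).quasiMeasurePreserving.ae h]
    with t ht (ht0 : 0 ≤ t) using ht (add_nonneg ht0 ha)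

section Solutions

variable {n : ℕ} {U : Type*} [MetricSpace U] {X X' : Set (EuclideanSpace ℝ (Fin n))}
  {f f' : EuclideanSpace ℝ (Fin n) → U → EuclideanSpace ℝ (Fin n)} {u u' : ℝ → U}
  {y z : ℝ → EuclideanSpace ℝ (Fin n)} {I : Set ℝ}

lemma isInput_const (μ : U) : IsInput (fun _ : ℝ => μ) :=
  ⟨aestronglyMeasurable_const, fun _ _ _ => ⟨{μ}, isCompact_singleton, ae_of_all _ fun _ => rfl⟩⟩

namespace IsSolOn

lemma mono (h : IsSolOn X f u y I) {J : Set ℝ} (hJ : J ⊆ I) : IsSolOn X f u y J :=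
  ⟨h.1.mono hJ, fun t ht => h.2.1 t (hJ ht), fun t ht => h.2.2.1 t (hJ ht),
    fun t ht => h.2.2.2 t (hJ ht)⟩

lemma congr (h : IsSolOn X f u y I) (hI : I.OrdConnected) (h0 : (0 : ℝ) ∈ I)
    (hyz : EqOn y z I) (hzX : ∀ t ∈ I, z t ∈ X')
    (hf : ∀ t ∈ I, f' (z t) (u t) = f (y t) (u t)) : IsSolOn X' f' u z I := by
  have hint : ∀ t ∈ I, EqOn (fun s => f' (z s) (u s)) (fun s => f (y s) (u s)) (uIcc 0 t) :=
    fun t ht s hs => hf s (hI.uIcc_subset h0 ht hs)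
  refine ⟨h.1.congr hyz.symm, hzX,
    fun t ht => (h.2.2.1 t ht).congr fun s hs => (hint t ht (uIoc_subset_uIcc hs)).symm,
    fun t ht => ?_⟩
  rw [← hyz ht, ← hyz h0, h.2.2.2 t ht, intervalIntegral.integral_congr (hint t ht)]

lemma of_forall_Icc (h : ∀ k : ℕ, IsSolOn X f u y (Icc 0 k)) : IsSolOn X f u y (Ici 0) := by
  have hmem : ∀ t ∈ Ici (0 : ℝ), t ∈ Icc 0 (⌈t⌉₊ : ℝ) := fun t ht => ⟨ht, Nat.le_ceil t⟩
  refine ⟨fun t ht => ?_, fun t ht => (h _).2.1 t (hmem t ht),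
    fun t ht => (h _).2.2.1 t (hmem t ht), fun t ht => (h _).2.2.2 t (hmem t ht)⟩
  have hlt : t < (⌈t⌉₊ + 1 : ℕ) := by push_cast; linarith [Nat.le_ceil t]
  exact ((h (⌈t⌉₊ + 1)).1 t ⟨ht, hlt.le⟩).mono_of_mem_nhdsWithin <|
    mem_of_superset (inter_mem_nhdsWithin _ (Iio_mem_nhds hlt)) fun s hs => ⟨hs.1, hs.2.le⟩

lemma comp_add_right (h : IsSolOn X f u y (Ici 0)) {a : ℝ} (ha : 0 ≤ a) :
    IsSolOn X f (fun t => u (t + a)) (fun t => y (t + a)) (Ici 0) := by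
  have hshift : ∀ t ∈ Ici (0 : ℝ), t + a ∈ Ici (0 : ℝ) := fun t (ht : 0 ≤ t) =>
    add_nonneg ht ha
  have hint : ∀ t ∈ Ici (0 : ℝ), IntervalIntegrable (fun s => f (y s) (u s)) volume a (t + a) :=
    fun t ht => (h.2.2.1 a ha).symm.trans (h.2.2.1 _ (hshift t ht))
  refine ⟨h.1.comp (continuous_add_const a).continuousOn hshift,
    fun t ht => h.2.1 _ (hshift t ht), fun t ht => ?_, fun t ht => ?_⟩
  · simpa using (hint t ht).comp_add_right a
  · dsimp only
    rw [zero_add, intervalIntegral.integral_comp_add_right (fun s => f (y s) (u s)), zero_add,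
      h.2.2.2 _ (hshift t ht), h.2.2.2 a ha, add_assoc,
      intervalIntegral.integral_add_adjacent_intervals (h.2.2.1 a ha) (hint t ht)]

lemma norm_sub_le_gronwallBound (hy : IsSolOn X f u y I) (hz : IsSolOn X' f' u' z I) {T L η : ℝ}
    (hT : Icc 0 T ⊆ I)
    (hbound : ∀ᵐ s ∂volume.restrict (Icc 0 T),
      ‖f (y s) (u s) - f' (z s) (u' s)‖ ≤ L * ‖y s - z s‖ + η) :
    ∀ t ∈ Icc 0 T, ‖y t - z t‖ ≤ gronwallBound ‖y 0 - z 0‖ L η t := by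
  have hvw : ∀ t ∈ Icc 0 T,
      (y - z) t = (y - z) 0 + ∫ s in 0..t, (f (y s) (u s) - f' (z s) (u' s)) := fun t ht => by
    rw [Pi.sub_apply, Pi.sub_apply, intervalIntegral.integral_sub (hy.2.2.1 t (hT ht))
      (hz.2.2.1 t (hT ht)), hy.2.2.2 t (hT ht), hz.2.2.2 t (hT ht)]
    abel
  simpa using norm_le_gronwallBound_of_eq_add_integral_s1 ((hy.1.mono hT).sub (hz.1.mono hT))
    (fun t ht => (hy.2.2.1 t (hT ht)).sub (hz.2.2.1 t (hT ht))) hvw hbound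

lemma dist_le_mul_exp (hy : IsSolOn X f u y I) (hz : IsSolOn X' f u z I) {T : ℝ}
    (hT : Icc 0 T ⊆ I) {C : Set (EuclideanSpace ℝ (Fin n))} {L : ℝ≥0}
    (hL : ∀ᵐ s ∂volume.restrict (Icc 0 T), LipschitzOnWith L (f · (u s)) C)
    (hyC : ∀ t ∈ Icc 0 T, y t ∈ C) (hzC : ∀ t ∈ Icc 0 T, z t ∈ C) :
    ∀ t ∈ Icc 0 T, dist (y t) (z t) ≤ dist (y 0) (z 0) * Real.exp (L * t) := by
  have hbound : ∀ᵐ s ∂volume.restrict (Icc 0 T),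
      ‖f (y s) (u s) - f (z s) (u s)‖ ≤ L * ‖y s - z s‖ + 0 := by
    filter_upwards [hL, ae_restrict_mem measurableSet_Icc] with s hs hsT
    rw [add_zero]
    exact hs.norm_sub_le (hyC s hsT) (hzC s hsT)
  simpa [gronwallBound_ε0, dist_eq_norm] using hy.norm_sub_le_gronwallBound hz hT hbound

lemma eqOn_Icc (hflip : LocallyUniformlyLipschitzOn X f)
    (hfc : ContinuousOn (Function.uncurry f) (X ×ˢ univ)) {K₀ : Set U} (hK₀ : IsCompact K₀)
    {T : ℝ} (hu : ∀ᵐ s ∂volume.restrict (Icc 0 T), u s ∈ K₀)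
    (hy : IsSolOn X f u y (Icc 0 T)) (hz : IsSolOn X f u z (Icc 0 T)) (h0 : y 0 = z 0) :
    EqOn y z (Icc 0 T) := by
  -- both trajectories stay in a compact subset of `X`, on which `f` is uniformly Lipschitz
  obtain ⟨L, hL⟩ := hflip.exists_lipschitzOnWith hfc
    ((isCompact_Icc.image_of_continuousOn hy.1).union (isCompact_Icc.image_of_continuousOn hz.1))
    (union_subset (image_subset_iff.2 hy.2.1) (image_subset_iff.2 hz.2.1)) hK₀
  intro t ht
  have := hy.dist_le_mul_exp hz subset_rfl (hu.mono fun s hs => hL _ hs)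
    (fun t ht => Or.inl (mem_image_of_mem y ht)) (fun t ht => Or.inr (mem_image_of_mem z ht)) t ht
  rwa [h0, dist_self, zero_mul, dist_le_zero] at this

lemma eqOn_Ici (hflip : LocallyUniformlyLipschitzOn X f)
    (hfc : ContinuousOn (Function.uncurry f) (X ×ˢ univ)) (hu : IsInput u)
    (hy : IsSolOn X f u y (Ici 0)) (hz : IsSolOn X f u z (Ici 0)) (h0 : y 0 = z 0) :
    EqOn y z (Ici 0) := by
  intro t (ht : 0 ≤ t)
  obtain ⟨K₀, hK₀, huK⟩ := hu.2 (Icc 0 t) isCompact_Icc Icc_subset_Ici_self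
  exact eqOn_Icc hflip hfc hK₀ huK (hy.mono Icc_subset_Ici_self) (hz.mono Icc_subset_Ici_self) h0
    ⟨ht, le_rfl⟩

end IsSolOn

end Solutions

section Existence

variable {n : ℕ} {U : Type*} [MetricSpace U]
  {F : EuclideanSpace ℝ (Fin n) → U → EuclideanSpace ℝ (Fin n)} {u : ℝ → U}

theorem exists_isSolOn_Icc (hF : Continuous (Function.uncurry F)) {K₀ : Set U}
    (hK₀ : IsCompact K₀) {L : ℝ≥0} (hL : ∀ μ ∈ K₀, LipschitzWith L (F · μ)) {c : ℝ} (hc : 0 ≤ c)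
    (hu : AEStronglyMeasurable u (volume.restrict (Icc 0 c)))
    (huK : ∀ᵐ s ∂volume.restrict (Icc 0 c), u s ∈ K₀) (ξ : EuclideanSpace ℝ (Fin n)) :
    ∃ y, IsSolOn univ F u y (Icc 0 c) ∧ y 0 = ξ := by
  let ext (y : C(Icc 0 c, EuclideanSpace ℝ (Fin n))) (t : ℝ) := y (projIcc 0 c hc t)
  have hext : ∀ y, Continuous (ext y) := fun y => y.continuous.comp continuous_projIcc
  have hint : ∀ y, ∀ t ∈ Icc 0 c, IntervalIntegrable (fun s => F (ext y s) (u s)) volume 0 t :=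
    fun y t ht => intervalIntegrable_comp_of_isCompact hF ht.1 (hext y).continuousOn
      (hu.mono_measure (Measure.restrict_mono (Icc_subset_Icc_right ht.2) le_rfl)) hK₀
      (ae_restrict_of_ae_restrict_of_subset (Icc_subset_Icc_right ht.2) huK)
  let Φ (y : C(Icc 0 c, EuclideanSpace ℝ (Fin n))) : C(Icc 0 c, EuclideanSpace ℝ (Fin n)) :=
    ⟨fun t => ξ + ∫ s in 0..(t : ℝ), F (ext y s) (u s), by
      have := intervalIntegral.continuousOn_primitive_interval' (hint y c ⟨hc, le_rfl⟩)
        left_mem_uIcc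
      rw [uIcc_of_le hc] at this
      exact (continuousOn_const.add this).comp_continuous continuous_subtype_val Subtype.prop⟩
  have hΦ : ∀ k y z (t : Icc 0 c),
      ‖(Φ^[k] y) t - (Φ^[k] z) t‖ ≤ (L * (t : ℝ)) ^ k / k.factorial * dist y z := by
    intro k y z
    induction k with
    | zero => exact fun t => by simpa [← dist_eq_norm] using ContinuousMap.dist_apply_le_dist t
    | succ k ih =>
      intro ⟨t, ht⟩
      rw [Function.iterate_succ_apply', Function.iterate_succ_apply']
      change ‖(ξ + _) - (ξ + _)‖ ≤ _
      rw [add_sub_add_left_eq_sub]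
      refine norm_integral_sub_le_pow_div_factorial hL ht.1
        (((ae_restrict_iff' measurableSet_Icc).1 huK).mono fun s hs hst =>
          hs ⟨hst.1.le, hst.2.trans ht.2⟩) (hint _ t ht) (hint _ t ht) fun s hst => ?_
      simpa [ext, projIcc_of_mem hc ⟨hst.1.le, hst.2.trans ht.2⟩] using
        ih ⟨s, hst.1.le, hst.2.trans ht.2⟩
  obtain ⟨y, hy⟩ := ContinuousMap.exists_isFixedPt_of_norm_iterate_le hc L.2 hΦ
  have hyΦ : ∀ t (ht : t ∈ Icc 0 c), ext y t = ξ + ∫ s in 0..t, F (ext y s) (u s) := fun t ht => by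
    simp only [ext, projIcc_of_mem hc ht]
    exact (DFunLike.congr_fun hy ⟨t, ht⟩).symm
  have hy0 : ext y 0 = ξ := by simpa using hyΦ 0 ⟨le_rfl, hc⟩
  exact ⟨ext y, ⟨(hext y).continuousOn, fun _ _ => trivial, hint y,
    fun t ht => by rw [hy0]; exact hyΦ t ht⟩, hy0⟩

theorem exists_isSolOn_Ici (hF : Continuous (Function.uncurry F))
    (hlip : ∀ K₀ : Set U, IsCompact K₀ → ∃ L : ℝ≥0, ∀ μ ∈ K₀, LipschitzWith L (F · μ))
    (hu : IsInput u) (ξ : EuclideanSpace ℝ (Fin n)) :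
    ∃ y, IsSolOn univ F u y (Ici 0) ∧ y 0 = ξ := by
  have hK : ∀ c : ℝ, ∃ K₀, IsCompact K₀ ∧ ∀ᵐ s ∂volume.restrict (Icc 0 c), u s ∈ K₀ :=
    fun c => hu.2 (Icc 0 c) isCompact_Icc Icc_subset_Ici_self
  have hsol : ∀ k : ℕ, ∃ y, IsSolOn univ F u y (Icc 0 k) ∧ y 0 = ξ := fun k => by
    obtain ⟨K₀, hK₀, huK⟩ := hK k
    obtain ⟨L, hL⟩ := hlip K₀ hK₀
    exact exists_isSolOn_Icc hF hK₀ hL k.cast_nonneg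
      (hu.1.mono_measure (Measure.restrict_mono Icc_subset_Ici_self le_rfl)) huK ξ
  choose Y hY hY0 using hsol
  have hflip : LocallyUniformlyLipschitzOn univ F := fun _ _ K₀ hK₀ =>
    let ⟨L, hL⟩ := hlip K₀ hK₀
    ⟨univ, univ_mem, L, fun x _ z _ μ hμ => (hL μ hμ).norm_sub_le x z⟩
  have hcons : ∀ j k : ℕ, j ≤ k → EqOn (Y k) (Y j) (Icc 0 j) := fun j k hjk => by
    obtain ⟨K₀, hK₀, huK⟩ := hK j
    exact IsSolOn.eqOn_Icc hflip hF.continuousOn hK₀ huK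
      ((hY k).mono (Icc_subset_Icc_right (by exact_mod_cast hjk))) (hY j)
      ((hY0 k).trans (hY0 j).symm)
  have hagree : ∀ k : ℕ, EqOn (Y k) (fun t => Y ⌈t⌉₊ t) (Icc 0 k) := fun k t ht =>
    hcons _ _ (Nat.ceil_le.2 ht.2) ⟨ht.1, Nat.le_ceil t⟩
  refine ⟨fun t => Y ⌈t⌉₊ t, IsSolOn.of_forall_Icc fun k => (hY k).congr ordConnected_Icc
    ⟨le_rfl, k.cast_nonneg⟩ (hagree k) (fun _ _ => trivial)
    fun t ht => congrArg (F · (u t)) (hagree k ht).symm, ?_⟩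
  simp [hY0]

end Existence

section ProjectedField

variable {E : Type*} [NormedAddCommGroup E] [NormedSpace ℝ E] {U : Type*}
  {f : E → U → E} {c : E} {r : ℝ}

noncomputable def projectedField (c : E) (r : ℝ) (f : E → U → E) (x : E) (μ : U) : E :=
  f (ballRetraction c r x) μ

lemma projectedField_of_mem (hr : 0 < r) {x : E} (hx : x ∈ closedBall c r) (μ : U) :
    projectedField c r f x μ = f x μ := by
  rw [projectedField, ballRetraction_of_mem hr hx]

lemma projectedField_ballRetraction (hr : 0 < r) (x : E) (μ : U) :
    projectedField c r f (ballRetraction c r x) μ = projectedField c r f x μ :=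
  projectedField_of_mem hr (ballRetraction_mem_closedBall hr x) μ

variable [MetricSpace U] {X : Set E}

lemma continuous_projectedField (hr : 0 < r) (hrX : closedBall c r ⊆ X)
    (hfc : ContinuousOn (Function.uncurry f) (X ×ˢ univ)) :
    Continuous (Function.uncurry (projectedField c r f)) :=
  hfc.comp_continuous (((lipschitzWith_ballRetraction hr).continuous.comp continuous_fst).prodMk
    continuous_snd) fun p => ⟨hrX (ballRetraction_mem_closedBall hr p.1), trivial⟩

lemma exists_lipschitzWith_projectedField [ProperSpace E] (hr : 0 < r) (hrX : closedBall c r ⊆ X)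
    (hflip : LocallyUniformlyLipschitzOn X f) (hfc : ContinuousOn (Function.uncurry f) (X ×ˢ univ))
    {K₀ : Set U} (hK₀ : IsCompact K₀) :
    ∃ L : ℝ≥0, ∀ μ ∈ K₀, LipschitzWith L (projectedField c r f · μ) := by
  obtain ⟨L, hL⟩ := hflip.exists_lipschitzOnWith hfc (isCompact_closedBall c r) hrX hK₀
  exact ⟨L * 2, fun μ hμ => lipschitzOnWith_univ.1 <| (hL μ hμ).comp
    (lipschitzWith_ballRetraction hr).lipschitzOnWith fun x _ => ballRetraction_mem_closedBall hr x⟩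

lemma exists_norm_projectedField_sub_lt [ProperSpace E] (hr : 0 < r) (hrX : closedBall c r ⊆ X)
    (hfc : ContinuousOn (Function.uncurry f) (X ×ˢ univ)) {η : ℝ} (hη : 0 < η) (μ₀ : U) :
    ∃ b > 0, ∀ x μ, dist μ μ₀ < b →
      ‖projectedField c r f x μ - projectedField c r f x μ₀‖ < η := by
  have hg := continuous_projectedField hr hrX hfc
  have hnear : ∀ᶠ μ in 𝓝 μ₀, ∀ x ∈ closedBall c r,
      ‖projectedField c r f x μ - projectedField c r f x μ₀‖ < η := by
    refine (isCompact_closedBall c r).eventually_forall_of_forall_eventually fun x _ => ?_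
    have hcont : ContinuousAt (fun p : U × E =>
        ‖projectedField c r f p.2 p.1 - projectedField c r f p.2 μ₀‖) (μ₀, x) := by
      fun_prop
    simpa using hcont.eventually (gt_mem_nhds (by simpa using hη))
  obtain ⟨b, hb, hball⟩ := Metric.eventually_nhds_iff.1 hnear
  refine ⟨b, hb, fun x μ hμ => ?_⟩
  rw [← projectedField_ballRetraction hr x μ, ← projectedField_ballRetraction hr x μ₀]
  exact hball hμ _ (ballRetraction_mem_closedBall hr x)

end ProjectedField

section Attraction

variable {α : Type*} [MetricSpace α] {x₀ : α}

theorem exists_forall_ge_dist_lt_of_tendsto {S : Set (ℝ → α)} {K : Set α} (hK : IsCompact K)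
    (hshift : ∀ y ∈ S, ∀ a ≥ 0, (fun t => y (t + a)) ∈ S)
    (hstable : ∀ ε > 0, ∃ δ > 0, ∀ y ∈ S, dist (y 0) x₀ ≤ δ → ∀ t ≥ 0, dist (y t) x₀ < ε)
    (hex : ∀ ζ ∈ K, ∃ y ∈ S, y 0 = ζ) (hattr : ∀ y ∈ S, y 0 ∈ K → Tendsto y atTop (𝓝 x₀))
    (hcont : ∀ y ∈ S, y 0 ∈ K → ∀ T ≥ 0, ∀ η > 0, ∃ ρ > 0,
      ∀ z ∈ S, z 0 ∈ K → dist (z 0) (y 0) < ρ → dist (z T) (y T) < η)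
    {ε : ℝ} (hε : 0 < ε) : ∃ T > 0, ∀ y ∈ S, y 0 ∈ K → ∀ t ≥ T, dist (y t) x₀ < ε := by
  obtain ⟨δ, hδ, hS⟩ := hstable ε hε
  -- trajectories starting near `ζ` follow the one from `ζ` into the `δ`-ball, and then stay
  have hlocal : ∀ ζ ∈ K, ∃ Tζ ≥ 0, ∃ ρ > 0,
      ∀ y ∈ S, y 0 ∈ K → dist (y 0) ζ < ρ → ∀ t ≥ Tζ, dist (y t) x₀ < ε := by
    intro ζ hζ
    obtain ⟨z, hz, rfl⟩ := hex ζ hζ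
    obtain ⟨T, hT⟩ := Metric.tendsto_atTop.1 (hattr z hz hζ) (δ / 2) (half_pos hδ)
    obtain ⟨ρ, hρ, hzρ⟩ := hcont z hz hζ (max T 0) (le_max_right _ _) (δ / 2) (half_pos hδ)
    refine ⟨max T 0, le_max_right _ _, ρ, hρ, fun y hy hyK hyρ t ht => ?_⟩
    have hyT : dist (y (0 + max T 0)) x₀ ≤ δ := by
      rw [zero_add]
      linarith [dist_triangle (y (max T 0)) (z (max T 0)) x₀, hzρ y hy hyK hyρ,
        hT _ (le_max_left T 0)]
    simpa using hS _ (hshift y hy _ (le_max_right _ _)) hyT (t - max T 0) (sub_nonneg.2 ht)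
  choose! Tf hTf ρf hρf hlocal using hlocal
  obtain ⟨t, htK, hcover⟩ := hK.elim_nhds_subcover (fun ζ => ball ζ (ρf ζ))
    fun ζ hζ => ball_mem_nhds ζ (hρf ζ hζ)
  have hsum : ∀ ζ ∈ t, Tf ζ ≤ ∑ ζ ∈ t, Tf ζ :=
    fun ζ hζ => Finset.single_le_sum (fun ζ hζ => hTf ζ (htK ζ hζ)) hζ
  refine ⟨∑ ζ ∈ t, Tf ζ + 1, by linarith [Finset.sum_nonneg fun ζ hζ => hTf ζ (htK ζ hζ)],
    fun y hy hyK s hs => ?_⟩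
  obtain ⟨ζ, hζt, hyζ⟩ := mem_iUnion₂.1 (hcover hyK)
  exact hlocal ζ (htK ζ hζt) y hy hyK hyζ s (by linarith [hsum ζ hζt])

theorem forall_dist_le_of_shadowing {y : ℝ → α} {T δ R m : ℝ} (hT : 0 < T)
    (hshadow : ∀ a ≥ 0, dist (y a) x₀ ≤ δ → ∃ z : ℝ → α, (∀ t ∈ Icc 0 T, dist (z t) x₀ ≤ R) ∧
      dist (z T) x₀ ≤ δ - m ∧ ∀ t ∈ Icc 0 T, dist (y (t + a)) (z t) ≤ m)
    (hy0 : dist (y 0) x₀ ≤ δ) : ∀ t ≥ 0, dist (y t) x₀ ≤ R + m := by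
  have hstep : ∀ a ≥ 0, dist (y a) x₀ ≤ δ →
      (∀ t ∈ Icc 0 T, dist (y (t + a)) x₀ ≤ R + m) ∧ dist (y (T + a)) x₀ ≤ δ := by
    intro a ha hya
    obtain ⟨z, hzR, hzT, hyz⟩ := hshadow a ha hya
    exact ⟨fun t ht => by linarith [dist_triangle (y (t + a)) (z t) x₀, hzR t ht, hyz t ht],
      by linarith [dist_triangle (y (T + a)) (z T) x₀, hyz T ⟨hT.le, le_rfl⟩]⟩
  have hperiod : ∀ k : ℕ, dist (y (k * T)) x₀ ≤ δ := by
    intro k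
    induction k with
    | zero => simpa using hy0
    | succ k ih => simpa [add_mul, add_comm] using (hstep _ (by positivity) ih).2
  intro t ht
  have hk : ⌊t / T⌋₊ * T ≤ t := (le_div_iff₀ hT).1 (Nat.floor_le (div_nonneg ht hT.le))
  have hk' : t < (⌊t / T⌋₊ + 1) * T := (div_lt_iff₀ hT).1 (Nat.lt_floor_add_one _)
  simpa using (hstep _ (by positivity) (hperiod ⌊t / T⌋₊)).1 (t - ⌊t / T⌋₊ * T)
    ⟨by linarith, by linarith⟩

end Attraction

section System

variable {n : ℕ} {U : Type*} [MetricSpace U] {X O : Set (EuclideanSpace ℝ (Fin n))}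
  {f : EuclideanSpace ℝ (Fin n) → U → EuclideanSpace ℝ (Fin n)} {xbar : EuclideanSpace ℝ (Fin n)}
  {ubar : U}

theorem forall_isSolOn_dist_lt (hflip : LocallyUniformlyLipschitzOn X f)
    (hfc : ContinuousOn (Function.uncurry f) (X ×ˢ univ))
    (hstab : ∀ ε > 0, ∃ δ > 0, ∀ ξ ∈ X, dist ξ xbar ≤ δ →
      ∃ y, IsSolOn X f (fun _ => ubar) y (Ici 0) ∧ y 0 = ξ ∧ ∀ t ≥ (0:ℝ), dist (y t) xbar < ε) :
    ∀ ε > 0, ∃ δ > 0, ∀ y, IsSolOn X f (fun _ => ubar) y (Ici 0) → dist (y 0) xbar ≤ δ →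
      ∀ t ≥ (0:ℝ), dist (y t) xbar < ε := by
  intro ε hε
  obtain ⟨δ, hδ, hsol⟩ := hstab ε hε
  refine ⟨δ, hδ, fun y hy hy0 t ht => ?_⟩
  obtain ⟨z, hz, hz0, hzε⟩ := hsol (y 0) (hy.2.1 0 self_mem_Ici) hy0
  rw [IsSolOn.eqOn_Ici hflip hfc (isInput_const ubar) hy hz hz0.symm ht]
  exact hzε t ht

theorem exists_forall_ge_isSolOn_dist_lt (hflip : LocallyUniformlyLipschitzOn X f)
    (hfc : ContinuousOn (Function.uncurry f) (X ×ˢ univ))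
    (hstable : ∀ ε > 0, ∃ δ > 0, ∀ y, IsSolOn X f (fun _ => ubar) y (Ici 0) →
      dist (y 0) xbar ≤ δ → ∀ t ≥ (0:ℝ), dist (y t) xbar < ε)
    (hO : ∀ ξ ∈ O, ∃ y, IsSolOn X f (fun _ => ubar) y (Ici 0) ∧ y 0 = ξ ∧
      Tendsto y atTop (𝓝 xbar))
    {K C : Set (EuclideanSpace ℝ (Fin n))} (hK : IsCompact K) (hKO : K ⊆ O) (hC : IsCompact C)
    (hCX : C ⊆ X) (hKC : ∀ y, IsSolOn X f (fun _ => ubar) y (Ici 0) → y 0 ∈ K → ∀ t ≥ 0, y t ∈ C)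
    {ε : ℝ} (hε : 0 < ε) :
    ∃ T > 0, ∀ y, IsSolOn X f (fun _ => ubar) y (Ici 0) → y 0 ∈ K →
      ∀ t ≥ T, dist (y t) xbar < ε := by
  obtain ⟨L, hL⟩ := hflip.exists_lipschitzOnWith hfc hC hCX isCompact_singleton
  refine exists_forall_ge_dist_lt_of_tendsto (S := {y | IsSolOn X f (fun _ => ubar) y (Ici 0)}) hK
    (fun y hy a ha => hy.comp_add_right ha) hstable
    (fun ζ hζ => let ⟨y, hy, hy0, _⟩ := hO ζ (hKO hζ); ⟨y, hy, hy0⟩) (fun y hy hyK => ?_)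
    (fun y hy hyK T hT η hη => ⟨η / Real.exp (L * T), by positivity, fun z hz hzK hzy => ?_⟩) hε
  · obtain ⟨z, hz, hz0, hzx⟩ := hO (y 0) (hKO hyK)
    exact hzx.congr' <| eventually_atTop.2
      ⟨0, fun t ht => IsSolOn.eqOn_Ici hflip hfc (isInput_const ubar) hz hy hz0 ht⟩
  · calc dist (z T) (y T) ≤ dist (z 0) (y 0) * Real.exp (L * T) :=
          hz.dist_le_mul_exp hy Icc_subset_Ici_self (ae_of_all _ fun _ => hL ubar rfl)
            (fun s hs => hKC z hz hzK s hs.1) (fun s hs => hKC y hy hyK s hs.1) T ⟨hT, le_rfl⟩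
      _ < η := (lt_div_iff₀ (Real.exp_pos _)).1 hzy

theorem exists_forall_shadowing_projectedField {r : ℝ} (hr : 0 < r)
    (hrX : closedBall xbar r ⊆ X) (hflip : LocallyUniformlyLipschitzOn X f)
    (hfc : ContinuousOn (Function.uncurry f) (X ×ˢ univ)) (T : ℝ) {m : ℝ} (hm : 0 < m) :
    ∃ b > 0, ∀ u : ℝ → U, (∀ᵐ t ∂volume.restrict (Ici 0), dist (u t) ubar < b) →
      ∀ y, IsSolOn univ (projectedField xbar r f) u y (Ici 0) → ∀ a ≥ 0,
      ∀ z, IsSolOn X f (fun _ => ubar) z (Ici 0) → z 0 = y a →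
      (∀ t ∈ Icc 0 T, z t ∈ closedBall xbar r) → ∀ t ∈ Icc 0 T, dist (y (t + a)) (z t) ≤ m := by
  obtain ⟨L, hL⟩ :=
    exists_lipschitzWith_projectedField hr hrX hflip hfc (isCompact_singleton (x := ubar))
  obtain ⟨η, hη, hηm⟩ : ∃ η > 0, gronwallBound 0 L η T < m := by
    have := (gronwallBound_continuous_ε 0 L T).tendsto 0
    rw [gronwallBound_ε0_δ0] at this
    exact (this.eventually (gt_mem_nhds hm)).exists_gt
  obtain ⟨b, hb, hsmall⟩ := exists_norm_projectedField_sub_lt hr hrX hfc hη ubar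
  refine ⟨b, hb, fun u hu y hy a ha z hz hza hzr t ht => ?_⟩
  set g := projectedField xbar r f
  have hbound : ∀ᵐ s ∂volume.restrict (Icc 0 T),
      ‖g (y (s + a)) (u (s + a)) - f (z s) ubar‖ ≤ L * ‖y (s + a) - z s‖ + η := by
    filter_upwards [ae_restrict_of_ae_restrict_of_subset Icc_subset_Ici_self
      (ae_restrict_Ici_comp_add_right ha hu), ae_restrict_mem measurableSet_Icc] with s hs hsT
    rw [← projectedField_of_mem (f := f) hr (hzr s hsT)]
    calc _ ≤ ‖g (y (s + a)) (u (s + a)) - g (y (s + a)) ubar‖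
          + ‖g (y (s + a)) ubar - g (z s) ubar‖ := norm_sub_le_norm_sub_add_norm_sub _ _ _
      _ ≤ η + L * ‖y (s + a) - z s‖ :=
          add_le_add (hsmall _ _ hs).le ((hL ubar rfl).norm_sub_le _ _)
      _ = L * ‖y (s + a) - z s‖ + η := add_comm _ _
  have := (hy.comp_add_right ha).norm_sub_le_gronwallBound hz Icc_subset_Ici_self hbound t ht
  rw [zero_add, hza, sub_self, norm_zero] at this
  rw [dist_eq_norm]
  exact this.trans ((gronwallBound_mono le_rfl hη.le L.2 ht.2).trans hηm.le)

theorem exists_forall_dist_projectedField_lt (hflip : LocallyUniformlyLipschitzOn X f)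
    (hfc : ContinuousOn (Function.uncurry f) (X ×ˢ univ))
    (hstable : ∀ ε > 0, ∃ δ > 0, ∀ y, IsSolOn X f (fun _ => ubar) y (Ici 0) →
      dist (y 0) xbar ≤ δ → ∀ t ≥ (0:ℝ), dist (y t) xbar < ε)
    (hO : ∀ ξ ∈ O, ∃ y, IsSolOn X f (fun _ => ubar) y (Ici 0) ∧ y 0 = ξ ∧
      Tendsto y atTop (𝓝 xbar))
    {r : ℝ} (hr : 0 < r) (hrO : closedBall xbar r ⊆ O) (hrX : closedBall xbar r ⊆ X) :
    ∃ δ > 0, ∀ u : ℝ → U, (∀ᵐ t ∂volume.restrict (Ici 0), dist (u t) ubar < δ) →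
      ∀ y, IsSolOn univ (projectedField xbar r f) u y (Ici 0) → dist (y 0) xbar ≤ δ →
      ∀ t ≥ (0:ℝ), dist (y t) xbar < r := by
  obtain ⟨δ, hδ, hδr, hstay⟩ : ∃ δ > 0, δ ≤ r ∧ ∀ y, IsSolOn X f (fun _ => ubar) y (Ici 0) →
      dist (y 0) xbar ≤ δ → ∀ t ≥ (0:ℝ), dist (y t) xbar < r / 2 :=
    let ⟨δ, hδ, h⟩ := hstable (r / 2) (half_pos hr)
    ⟨min δ r, lt_min hδ hr, min_le_right _ _, fun y hy h0 => h y hy (h0.trans (min_le_left _ _))⟩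
  have hδO : closedBall xbar δ ⊆ O := (closedBall_subset_closedBall hδr).trans hrO
  have hstayr : ∀ y, IsSolOn X f (fun _ => ubar) y (Ici 0) → y 0 ∈ closedBall xbar δ →
      ∀ t ≥ (0:ℝ), y t ∈ closedBall xbar r := fun y hy hy0 t ht =>
    mem_closedBall.2 (by linarith [hstay y hy hy0 t ht])
  obtain ⟨T, hT, hret⟩ := exists_forall_ge_isSolOn_dist_lt hflip hfc hstable hO
    (isCompact_closedBall xbar δ) hδO (isCompact_closedBall xbar r) hrX hstayr (half_pos hδ)
  obtain ⟨b, hb, hshadow⟩ := exists_forall_shadowing_projectedField hr hrX hflip hfc T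
    (div_pos hδ four_pos)
  refine ⟨min δ b, lt_min hδ hb, fun u hu y hy hy0 t ht => ?_⟩
  -- over each period `T` the solution shadows an unforced one, which returns to the `δ/2`-ball
  suffices dist (y t) xbar ≤ r / 2 + δ / 4 by linarith
  refine forall_dist_le_of_shadowing hT (fun a ha hya => ?_) (hy0.trans (min_le_left _ _)) t ht
  obtain ⟨z, hz, hz0, -⟩ := hO (y a) (hδO (mem_closedBall.2 hya))
  have hz0' : dist (z 0) xbar ≤ δ := hz0 ▸ hya
  refine ⟨z, fun s hs => (hstay z hz hz0' s hs.1).le, ?_,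
    hshadow u (hu.mono fun _ h => h.trans_le (min_le_right _ _)) y hy a ha z hz hz0
      fun s hs => hstayr z hz hz0' s hs.1⟩
  linarith [hret z hz hz0' T le_rfl]

end System

theorem cics_stability_general {n : ℕ} {U : Type*} [MetricSpace U]
    (X : Set (EuclideanSpace ℝ (Fin n)))
    (f : EuclideanSpace ℝ (Fin n) → U → EuclideanSpace ℝ (Fin n))
    (xbar : EuclideanSpace ℝ (Fin n)) (ubar : U)
    (O : Set (EuclideanSpace ℝ (Fin n)))
    -- `f` is continuous, and locally Lipschitz in `x` uniformly on compacts of `U`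
    (hfc : ContinuousOn (fun p : EuclideanSpace ℝ (Fin n) × U => f p.1 p.2)
      (X ×ˢ (univ : Set U)))
    (hflip : ∀ ξ ∈ X, ∀ K₀ : Set U, IsCompact K₀ → ∃ V ∈ 𝓝 ξ, ∃ L : ℝ,
      ∀ x ∈ V, ∀ z ∈ V, ∀ μ ∈ K₀, ‖f x μ - f z μ‖ ≤ L * ‖x - z‖)
    -- `x̄` is a stable equilibrium of `ẋ = f(x, ū)` ...
    (hstab : ∀ ε > 0, ∃ δ > 0, ∀ ξ ∈ X, dist ξ xbar ≤ δ →
      ∃ y, IsSolOn X f (fun _ => ubar) y (Ici 0) ∧ y 0 = ξ ∧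
        ∀ t ≥ (0:ℝ), dist (y t) xbar < ε)
    -- ... whose domain of attraction is `O`, a neighborhood of `x̄`
    (hO : O = {ξ | ∃ y, IsSolOn X f (fun _ => ubar) y (Ici 0) ∧ y 0 = ξ ∧
      Tendsto y atTop (𝓝 xbar)})
    (hOnhd : O ∈ 𝓝 xbar) :
    ∀ ε > (0:ℝ), ∃ δ > (0:ℝ), ∀ ξ ∈ X, dist ξ xbar < δ →
      ∀ u : ℝ → U, IsInput u → SupNormLt u ubar δ →
        ∃ y, IsSolOn X f u y (Ici 0) ∧ y 0 = ξ ∧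
          ∀ t ≥ (0:ℝ), dist (y t) xbar < ε := by
  subst hO
  intro ε hε
  obtain ⟨r, hr, hrOε⟩ := nhds_basis_closedBall.mem_iff.1 (inter_mem hOnhd (ball_mem_nhds xbar hε))
  have hrO : closedBall xbar r ⊆ _ := fun ξ hξ => (hrOε hξ).1
  have hrX : closedBall xbar r ⊆ X := fun ξ hξ =>
    let ⟨y, hy, hy0, _⟩ := hrO hξ; hy0 ▸ hy.2.1 0 self_mem_Ici
  obtain ⟨δ, hδ, hsmall⟩ := exists_forall_dist_projectedField_lt hflip hfc
    (forall_isSolOn_dist_lt hflip hfc hstab) (fun ξ hξ => hξ) hr hrO hrX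
  refine ⟨δ, hδ, fun ξ _ hξ u hu ⟨b, hbδ, hub⟩ => ?_⟩
  obtain ⟨y, hy, hy0⟩ := exists_isSolOn_Ici (continuous_projectedField hr hrX hfc)
    (fun K₀ hK₀ => exists_lipschitzWith_projectedField hr hrX hflip hfc hK₀) hu ξ
  have hyB : ∀ t ∈ Ici (0:ℝ), y t ∈ closedBall xbar r := fun t ht => (hsmall u
    (hub.mono fun _ h => h.trans_lt hbδ) y hy (hy0 ▸ hξ.le) t ht).le
  exact ⟨y, hy.congr ordConnected_Ici self_mem_Ici (eqOn_refl _ _) (fun t ht => hrX (hyB t ht))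
    fun t ht => (projectedField_of_mem hr (hyB t ht) _).symm, hy0, fun t ht => (hrOε (hyB t ht)).2⟩

/-- **Theorem 1 (stability part).** For each `ε > 0` there is `δ > 0` such
that whenever `|ξ| < δ` and `‖u‖ < δ`, the solution `φ(t, ξ, u)` exists for all
`t ≥ 0` and satisfies `|φ(t, ξ, u)| < ε` for all `t ≥ 0`. -/
theorem cics_stability {n : ℕ} {U : Type*} [MetricSpace U]
    (X : Set (EuclideanSpace ℝ (Fin n)))
    (f : EuclideanSpace ℝ (Fin n) → U → EuclideanSpace ℝ (Fin n))
    (xbar : EuclideanSpace ℝ (Fin n)) (ubar : U)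
    (O : Set (EuclideanSpace ℝ (Fin n)))
    -- the state space is open, contains the equilibrium, and `f(x̄, ū) = 0`
    (hX : IsOpen X) (hxbar : xbar ∈ X) (heq : f xbar ubar = 0)
    -- `f` is continuous, and locally Lipschitz in `x` uniformly on compacts of `U`
    (hfc : ContinuousOn (fun p : EuclideanSpace ℝ (Fin n) × U => f p.1 p.2)
      (X ×ˢ (univ : Set U)))
    (hflip : ∀ ξ ∈ X, ∀ K₀ : Set U, IsCompact K₀ → ∃ V ∈ 𝓝 ξ, ∃ L : ℝ,
      ∀ x ∈ V, ∀ z ∈ V, ∀ μ ∈ K₀, ‖f x μ - f z μ‖ ≤ L * ‖x - z‖)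
    -- `x̄` is a stable equilibrium of `ẋ = f(x, ū)` ...
    (hstab : ∀ ε > 0, ∃ δ > 0, ∀ ξ ∈ X, dist ξ xbar ≤ δ →
      ∃ y, IsSolOn X f (fun _ => ubar) y (Ici 0) ∧ y 0 = ξ ∧
        ∀ t ≥ (0:ℝ), dist (y t) xbar < ε)
    -- ... whose domain of attraction is `O`, a neighborhood of `x̄`
    (hO : O = {ξ | ∃ y, IsSolOn X f (fun _ => ubar) y (Ici 0) ∧ y 0 = ξ ∧
      Tendsto y atTop (𝓝 xbar)})
    (hOnhd : O ∈ 𝓝 xbar) :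
    ∀ ε > (0:ℝ), ∃ δ > (0:ℝ), ∀ ξ ∈ X, dist ξ xbar < δ →
      ∀ u : ℝ → U, IsInput u → SupNormLt u ubar δ →
        ∃ y, IsSolOn X f u y (Ici 0) ∧ y 0 = ξ ∧
          ∀ t ≥ (0:ℝ), dist (y t) xbar < ε :=
  cics_stability_general X f xbar ubar O hfc hflip hstab hO hOnhd
end

section
/- Let x̄ be an asymptotically stable equilibrium of the autonomous system ẋ = f(x, ū), with domain of attraction O. Let x(·) be a solution of ẋ(t) = f(x(t), u(t)) defined on all of [0,∞), corresponding to an input u with u(t) → ū as t → ∞, such that the closure of the image {x(t) : t ≥ 0} is a compact subset of O. Then x(t) → x̄ as t → ∞. -/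
/-!
Limits of the time-translates `x (c k + ·)` along an ultrafilter exist: eventually `u` is close
to `ū`, so `f (x, u)` is bounded along the trajectory, `x` is eventually Lipschitz, and Ascoli turns
pointwise limits in the compact closure of the orbit into uniform limits on compact intervals.
Passing to the limit in the integral equation, using `u → ū`, each limit `z` solves `ż = f (z, ū)`
from a point of `O`; by uniqueness it converges to `x̄` and inherits the stability of `x̄`.

Hence `x` comes arbitrarily close to `x̄` at arbitrarily late times. If `x` did not converge, it
would, after each such visit, leave the `δ`-ball for the last time at `c k` and reach distance `ε`
at `b k`. A limit `z` of `x (c k + ·)` starts in the closed `δ`-ball. If the excursion lengths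
`b k - c k` are unbounded, `z` never re-enters the open `δ`-ball and cannot converge to `x̄`; if
they are bounded, `z` reaches distance `ε` in finite time, contradicting stability.
-/
open MeasureTheory Metric Set Filter Topology

theorem EquicontinuousOn.tendstoUniformlyOn_of_tendsto {ι X α : Type*} [TopologicalSpace X]
    [UniformSpace α] {F : ι → X → α} {f : X → α} {K : Set X} {l : Filter ι}
    (hK : IsCompact K) (hF : EquicontinuousOn F K)
    (h : ∀ x ∈ K, Tendsto (F · x) l (𝓝 (f x))) : TendstoUniformlyOn F f l K := by
  have key := (EquicontinuousOn.tendsto_uniformOnFun_iff_pi' (𝔖 := {K}) (by simpa) (by simpa)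
    l f).2 ?_
  · exact UniformOnFun.tendsto_iff_tendstoUniformlyOn.1 key K rfl
  · rw [tendsto_pi_nhds]
    rintro ⟨x, hx⟩
    exact h x (by simpa using hx)

theorem TendstoUniformlyOn.comp_continuousAt_of_isCompact {ι α β γ : Type*} [UniformSpace β]
    [UniformSpace γ] {F : ι → α → β} {f : α → β} {g : β → γ} {l : Filter ι} {s : Set α}
    {K : Set β} (h : TendstoUniformlyOn F f l s) (hK : IsCompact K) (hfK : MapsTo f s K)
    (hg : ∀ b ∈ K, ContinuousAt g b) :
    TendstoUniformlyOn (fun i a => g (F i a)) (g ∘ f) l s := fun r hr => by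
  filter_upwards [h _ (hK.uniformContinuousAt_of_continuousAt g hg hr)] with i hi a ha
  exact hi a ha (hfK ha)

theorem TendstoUniformlyOn.tendsto_intervalIntegral {ι E : Type*} [NormedAddCommGroup E]
    [NormedSpace ℝ E] {F : ι → ℝ → E} {f : ℝ → E} {l : Filter ι} {a b : ℝ}
    (hF : ∀ᶠ i in l, IntervalIntegrable (F i) volume a b) (hf : IntervalIntegrable f volume a b)
    (h : TendstoUniformlyOn F f l (uIcc a b)) :
    Tendsto (fun i => ∫ x in a..b, F i x) l (𝓝 (∫ x in a..b, f x)) := by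
  refine Metric.tendsto_nhds.2 fun ε hε => ?_
  have hε' : 0 < ε / (|b - a| + 1) := by positivity
  filter_upwards [hF, Metric.tendstoUniformlyOn_iff.1 h _ hε'] with i hFi hi
  rw [dist_eq_norm, ← intervalIntegral.integral_sub hFi hf]
  calc ‖∫ x in a..b, F i x - f x‖ ≤ ε / (|b - a| + 1) * |b - a| :=
        intervalIntegral.norm_integral_le_of_norm_le_const fun x hx => by
          rw [← dist_eq_norm, dist_comm]; exact (hi x (uIoc_subset_uIcc hx)).le
    _ < ε := by
        rw [div_mul_eq_mul_div, div_lt_iff₀ (by positivity)]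
        nlinarith [abs_nonneg (b - a)]

theorem IsCompact.exists_eventually_forall_norm_lt {α U F : Type*} [TopologicalSpace α]
    [TopologicalSpace U] [SeminormedAddCommGroup F] {C : Set α} (hC : IsCompact C)
    {g : α → U → F} {μ₀ : U} (hg : ∀ ξ ∈ C, ContinuousAt (fun p : α × U => g p.1 p.2) (ξ, μ₀)) :
    ∃ M, ∀ᶠ μ in 𝓝 μ₀, ∀ ξ ∈ C, ‖g ξ μ‖ < M := by
  obtain ⟨M, hM⟩ := hC.exists_bound_of_continuousOn fun ξ hξ =>
    ((hg ξ hξ).comp (x := ξ) (Continuous.prodMk_left μ₀).continuousAt).continuousWithinAt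
  refine ⟨M + 1, hC.eventually_forall_of_forall_eventually fun ξ hξ => ?_⟩
  have hcont : ContinuousAt (fun p : U × α => ‖g p.2 p.1‖) (μ₀, ξ) :=
    ((hg ξ hξ).comp (x := (μ₀, ξ)) continuous_swap.continuousAt).norm
  exact hcont.eventually_lt continuousAt_const (by simpa using (hM ξ hξ).trans_lt (lt_add_one M))

theorem Ultrafilter.exists_forall_tendsto_of_eventually_mem {ι α E : Type*} [TopologicalSpace E]
    (𝒰 : Ultrafilter ι) {C : Set E} (hC : IsCompact C) {F : ι → α → E}
    (hF : ∀ a, ∀ᶠ i in 𝒰, F i a ∈ C) :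
    ∃ z : α → E, ∀ a, z a ∈ C ∧ Tendsto (F · a) 𝒰 (𝓝 (z a)) := by
  choose z hzC hz using fun a => hC.ultrafilter_le_nhds' (𝒰.map (F · a)) (hF a)
  exact ⟨z, fun a => ⟨hzC a, hz a⟩⟩

theorem Filter.Tendsto.tendstoUniformlyOn_comp_add {ι U : Type*} [UniformSpace U] {u : ℝ → U}
    {μ₀ : U} (hu : Tendsto u atTop (𝓝 μ₀)) {c : ι → ℝ} {l : Filter ι} (hc : Tendsto c l atTop) :
    TendstoUniformlyOn (fun i s => u (c i + s)) (fun _ => μ₀) l (Ici 0) := fun r hr => by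
  obtain ⟨T, hT⟩ := eventually_atTop.1 (hu.eventually (mem_nhds_left μ₀ hr))
  filter_upwards [hc.eventually_ge_atTop T] with i hi s hs
  exact hT _ (by linarith [mem_Ici.1 hs])

theorem Ultrafilter.exists_tendsto_apply_of_tendstoUniformlyOn {ι α E : Type*}
    [TopologicalSpace α] [UniformSpace E] (𝒰 : Ultrafilter ι) {F : ι → α → E} {z : α → E}
    {K : Set α} (hK : IsCompact K) (hF : TendstoUniformlyOn F z 𝒰 K)
    (hFc : ∀ᶠ i in 𝒰, ContinuousOn (F i) K) {w : ι → α} (hw : ∀ᶠ i in 𝒰, w i ∈ K) :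
    ∃ τ ∈ K, Tendsto (fun i => F i (w i)) 𝒰 (𝓝 (z τ)) := by
  obtain ⟨τ, hτK, hτ⟩ := hK.ultrafilter_le_nhds' (𝒰.map w) hw
  exact ⟨τ, hτK, hF.tendsto_comp (hF.continuousOn hFc.frequently τ hτK)
    (tendsto_nhdsWithin_iff.2 ⟨hτ, hw⟩)⟩

theorem exists_last_le_of_lt {g : ℝ → ℝ} {a b δ : ℝ} (hab : a ≤ b) (hg : ContinuousOn g (Icc a b))
    (ha : g a ≤ δ) (hb : δ < g b) : ∃ c ∈ Ico a b, g c ≤ δ ∧ ∀ t ∈ Ioc c b, δ < g t := by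
  have hS : IsCompact {t ∈ Icc a b | g t ≤ δ} :=
    isCompact_Icc.of_isClosed_subset (hg.preimage_isClosed_of_isClosed isClosed_Icc isClosed_Iic)
      (sep_subset _ _)
  obtain ⟨c, ⟨hc, hcδ⟩, hcmax⟩ := hS.exists_isGreatest ⟨a, ⟨le_rfl, hab⟩, ha⟩
  refine ⟨c, ⟨hc.1, hc.2.lt_of_ne ?_⟩, hcδ, fun t ht => not_le.1 fun htδ => ?_⟩
  · rintro rfl
    exact hb.not_ge hcδ
  · exact ht.1.not_ge (hcmax ⟨⟨hc.1.trans ht.1.le, ht.2⟩, htδ⟩)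

theorem locallyLipschitzOn_of_norm_sub_le {E F : Type*} [SeminormedAddCommGroup E]
    [SeminormedAddCommGroup F] {g : E → F} {X : Set E}
    (h : ∀ ξ ∈ X, ∃ V ∈ 𝓝 ξ, ∃ L : ℝ, ∀ a ∈ V, ∀ b ∈ V, ‖g a - g b‖ ≤ L * ‖a - b‖) :
    LocallyLipschitzOn X g := fun ξ hξ => by
  obtain ⟨V, hV, L, hL⟩ := h ξ hξ
  refine ⟨Real.toNNReal L, V, nhdsWithin_le_nhds hV, .of_dist_le_mul fun a ha b hb => ?_⟩
  rw [dist_eq_norm, dist_eq_norm]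
  exact (hL a ha b hb).trans (by gcongr; exact Real.le_coe_toNNReal L)

theorem LipschitzOnWith.of_tendsto {ι α E : Type*} [PseudoMetricSpace α] [PseudoMetricSpace E]
    {F : ι → α → E} {z : α → E} {l : Filter ι} [l.NeBot] {K : NNReal} {s : Set α}
    (hF : ∀ᶠ i in l, LipschitzOnWith K (F i) s) (hz : ∀ a ∈ s, Tendsto (F · a) l (𝓝 (z a))) :
    LipschitzOnWith K z s :=
  LipschitzOnWith.of_dist_le_mul fun a ha b hb =>
    le_of_tendsto ((hz a ha).dist (hz b hb)) (hF.mono fun _ hi => hi.dist_le_mul a ha b hb)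

theorem LipschitzOnWith.comp_max_add {E : Type*} [PseudoMetricSpace E] {x : ℝ → E} {K : NNReal}
    {T : ℝ} (hx : LipschitzOnWith K x (Ici T)) (a : ℝ) :
    LipschitzOnWith K (fun s => x (max a T + s)) (Ici 0) := by
  have hmaps : MapsTo (fun s => max a T + s) (Ici 0) (Ici T) := fun s hs => by
    rw [mem_Ici] at hs ⊢
    linarith [le_max_right a T]
  simpa [Function.comp_def] using
    hx.comp (isometry_add_left (max a T)).lipschitz.lipschitzOnWith hmaps

section Solutions

variable {n : ℕ} {U : Type*} [MetricSpace U] {X : Set (EuclideanSpace ℝ (Fin n))}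
  {f : EuclideanSpace ℝ (Fin n) → U → EuclideanSpace ℝ (Fin n)} {u : ℝ → U}
  {x y₁ y₂ : ℝ → EuclideanSpace ℝ (Fin n)}

namespace IsSolOn

theorem sub_eq_intervalIntegral (hx : IsSolOn X f u x (Ici 0)) {a b : ℝ} (ha : 0 ≤ a)
    (hb : 0 ≤ b) : x b - x a = ∫ s in a..b, f (x s) (u s) := by
  rw [hx.2.2.2 a ha, hx.2.2.2 b hb, ← intervalIntegral.integral_interval_sub_left
    (hx.2.2.1 b hb) (hx.2.2.1 a ha)]
  abel

theorem lipschitzOnWith_Ici (hx : IsSolOn X f u x (Ici 0)) {T M : ℝ} (hT : 0 ≤ T)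
    (hM : ∀ t ≥ T, ‖f (x t) (u t)‖ ≤ M) : LipschitzOnWith (Real.toNNReal M) x (Ici T) := by
  refine LipschitzOnWith.of_dist_le_mul fun a ha b hb => ?_
  rw [dist_eq_norm, hx.sub_eq_intervalIntegral (hT.trans hb) (hT.trans ha), Real.dist_eq]
  exact intervalIntegral.norm_integral_le_of_norm_le_const fun s hs =>
    (hM s (le_min hb ha |>.trans (uIoc_subset_uIcc hs).1)).trans (Real.le_coe_toNNReal M)

theorem hasDerivWithinAt {μ : U} (hx : IsSolOn X f (fun _ => μ) x (Ici 0))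
    (hf : ContinuousOn (fun ξ => f ξ μ) X) {t : ℝ} (ht : 0 ≤ t) :
    HasDerivWithinAt x (f (x t) μ) (Ici t) t := by
  have hcont : ContinuousOn (fun s => f (x s) μ) (Ici 0) := hf.comp hx.1 hx.2.1
  have hderiv : HasDerivWithinAt (fun s => x 0 + ∫ σ in (0:ℝ)..s, f (x σ) μ)
      (f (x t) μ) (Ici t) t :=
    (intervalIntegral.integral_hasDerivWithinAt_right (hx.2.2.1 t ht)
      ((hcont.stronglyMeasurableAtFilter_nhdsWithin measurableSet_Ici t).filter_mono
        (nhdsWithin_mono _ (Ioi_subset_Ici_self.trans (Ici_subset_Ici.2 ht))))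
      ((hcont t ht).mono (Ioi_subset_Ici_self.trans (Ici_subset_Ici.2 ht)))).const_add _
  exact hderiv.congr (fun s hs => hx.2.2.2 s (ht.trans hs)) (hx.2.2.2 t ht)

theorem eqOn_of_apply_zero_eq_s2 {μ : U} (hf : LocallyLipschitzOn X (fun ξ => f ξ μ))
    (h₁ : IsSolOn X f (fun _ => μ) y₁ (Ici 0)) (h₂ : IsSolOn X f (fun _ => μ) y₂ (Ici 0))
    (h0 : y₁ 0 = y₂ 0) : EqOn y₁ y₂ (Ici 0) := by
  intro T hT
  set K := y₁ '' Icc 0 T ∪ y₂ '' Icc 0 T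
  have hK : IsCompact K :=
    (isCompact_Icc.image_of_continuousOn (h₁.1.mono Icc_subset_Ici_self)).union
      (isCompact_Icc.image_of_continuousOn (h₂.1.mono Icc_subset_Ici_self))
  have hKX : K ⊆ X := union_subset (image_subset_iff.2 fun t ht => h₁.2.1 t ht.1)
    (image_subset_iff.2 fun t ht => h₂.2.1 t ht.1)
  obtain ⟨L, hL⟩ := (hf.mono hKX).exists_lipschitzOnWith_of_compact hK
  exact ODE_solution_unique_of_mem_Icc_right (s := fun _ => K) (fun _ _ => hL)
    (h₁.1.mono Icc_subset_Ici_self) (fun t ht => h₁.hasDerivWithinAt hf.continuousOn ht.1)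
    (fun t ht => .inl ⟨t, Ico_subset_Icc_self ht, rfl⟩)
    (h₂.1.mono Icc_subset_Ici_self) (fun t ht => h₂.hasDerivWithinAt hf.continuousOn ht.1)
    (fun t ht => .inr ⟨t, Ico_subset_Icc_self ht, rfl⟩) h0 ⟨hT, le_rfl⟩

theorem intervalIntegrable_comp_add (hx : IsSolOn X f u x (Ici 0)) {c s : ℝ} (hc : 0 ≤ c)
    (hs : 0 ≤ s) : IntervalIntegrable (fun σ => f (x (c + σ)) (u (c + σ))) volume 0 s := by
  have hcs : IntervalIntegrable (fun σ => f (x σ) (u σ)) volume c (c + s) :=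
    (hx.2.2.1 (c + s) (add_nonneg hc hs)).mono_set <| by
      rw [uIcc_of_le (by linarith), uIcc_of_le (add_nonneg hc hs)]
      exact Icc_subset_Icc hc le_rfl
  simpa using hcs.comp_add_left c

theorem sub_eq_integral_comp_add (hx : IsSolOn X f u x (Ici 0)) {c s : ℝ} (hc : 0 ≤ c)
    (hs : 0 ≤ s) : x (c + s) - x c = ∫ σ in (0:ℝ)..s, f (x (c + σ)) (u (c + σ)) := by
  rw [hx.sub_eq_intervalIntegral hc (add_nonneg hc hs),
    intervalIntegral.integral_comp_add_left (fun σ => f (x σ) (u σ)), add_zero]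

theorem exists_lipschitzOnWith_Ici {ubar : U} (hx : IsSolOn X f u x (Ici 0))
    (hu : Tendsto u atTop (𝓝 ubar)) {C : Set (EuclideanSpace ℝ (Fin n))} (hC : IsCompact C)
    (hxC : MapsTo x (Ici 0) C)
    (hf : ∀ ξ ∈ C, ContinuousAt (fun p : EuclideanSpace ℝ (Fin n) × U => f p.1 p.2) (ξ, ubar)) :
    ∃ (M : NNReal) (T : ℝ), LipschitzOnWith M x (Ici T) := by
  obtain ⟨M, hM⟩ := hC.exists_eventually_forall_norm_lt hf
  obtain ⟨T, hT⟩ := eventually_atTop.1 (hu.eventually hM)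
  exact ⟨_, max T 0, hx.lipschitzOnWith_Ici (le_max_right T 0) fun t ht =>
    (hT t (le_of_max_le_left ht) (x t) (hxC (le_of_max_le_right ht))).le⟩

theorem eq_add_integral_of_tendstoUniformlyOn {ι : Type*} {l : Filter ι} [l.NeBot] {ubar : U}
    (hx : IsSolOn X f u x (Ici 0)) (hu : Tendsto u atTop (𝓝 ubar))
    {C : Set (EuclideanSpace ℝ (Fin n))} (hC : IsCompact C)
    (hf : ∀ ξ ∈ C, ContinuousAt (fun p : EuclideanSpace ℝ (Fin n) × U => f p.1 p.2) (ξ, ubar))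
    {c : ι → ℝ} (hc : Tendsto c l atTop) {z : ℝ → EuclideanSpace ℝ (Fin n)} {s : ℝ} (hs : 0 ≤ s)
    (hzC : MapsTo z (Icc 0 s) C) (hz : IntervalIntegrable (fun σ => f (z σ) ubar) volume 0 s)
    (hxz : TendstoUniformlyOn (fun i σ => x (c i + σ)) z l (Icc 0 s)) :
    z s = z 0 + ∫ σ in (0:ℝ)..s, f (z σ) ubar := by
  have hpair : TendstoUniformlyOn (fun i σ => (x (c i + σ), u (c i + σ))) (fun σ => (z σ, ubar))
      l (Icc 0 s) := fun r hr =>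
    (hxz.prodMk ((hu.tendstoUniformlyOn_comp_add hc).mono Icc_subset_Ici_self) r hr).diag_of_prod
  have hint : Tendsto (fun i => ∫ σ in (0:ℝ)..s, f (x (c i + σ)) (u (c i + σ))) l
      (𝓝 (∫ σ in (0:ℝ)..s, f (z σ) ubar)) := by
    refine TendstoUniformlyOn.tendsto_intervalIntegral
      ((hc.eventually_ge_atTop 0).mono fun i hi => hx.intervalIntegrable_comp_add hi hs) hz ?_
    rw [uIcc_of_le hs]
    exact hpair.comp_continuousAt_of_isCompact (hC.prod isCompact_singleton)
      (fun σ hσ => ⟨hzC hσ, rfl⟩) fun p hp => hp.2 ▸ hf p.1 hp.1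
  have hlim : Tendsto (fun i => x (c i + s) - x (c i + 0)) l (𝓝 (z s - z 0)) :=
    (hxz.tendsto_at ⟨hs, le_rfl⟩).sub (hxz.tendsto_at ⟨le_rfl, hs⟩)
  refine eq_add_of_sub_eq' (tendsto_nhds_unique hlim (hint.congr' ?_))
  filter_upwards [hc.eventually_ge_atTop 0] with i hi
  rw [add_zero, hx.sub_eq_integral_comp_add hi hs]

theorem exists_tendstoUniformlyOn_translate {ι : Type*} {ubar : U} (hX : IsOpen X)
    (hfc : ContinuousOn (fun p : EuclideanSpace ℝ (Fin n) × U => f p.1 p.2) (X ×ˢ univ))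
    (hx : IsSolOn X f u x (Ici 0)) (hu : Tendsto u atTop (𝓝 ubar))
    {C : Set (EuclideanSpace ℝ (Fin n))} (hC : IsCompact C) (hCX : C ⊆ X)
    (hxC : MapsTo x (Ici 0) C) (𝒰 : Ultrafilter ι) {c : ι → ℝ} (hc : Tendsto c 𝒰 atTop) :
    ∃ z, IsSolOn X f (fun _ => ubar) z (Ici 0) ∧ z 0 ∈ C ∧
      ∀ S, TendstoUniformlyOn (fun i s => x (c i + s)) z 𝒰 (Icc 0 S) := by
  have hf : ∀ ξ ∈ C, ContinuousAt (fun p : EuclideanSpace ℝ (Fin n) × U => f p.1 p.2)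
      (ξ, ubar) := fun ξ hξ =>
    hfc.continuousAt ((hX.prod isOpen_univ).mem_nhds ⟨hCX hξ, mem_univ _⟩)
  obtain ⟨M, T, hLip⟩ := hx.exists_lipschitzOnWith_Ici hu hC hxC hf
  obtain ⟨z, hz⟩ := 𝒰.exists_forall_tendsto_of_eventually_mem hC
    (F := fun i s => x (c i + s)) fun s =>
      (hc.eventually_ge_atTop (-s)).mono fun i hi => hxC (by rw [mem_Ici]; linarith)
  -- clamping the shift at `T` makes every translate `M`-Lipschitz, not just eventually
  have hG : ∀ᶠ i in 𝒰, EqOn (fun s => x (max (c i) T + s)) (fun s => x (c i + s)) (Ici 0) :=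
    (hc.eventually_ge_atTop T).mono fun i hi s _ => by simp only [max_eq_left hi]
  have hGz : ∀ s ∈ Ici (0:ℝ), Tendsto (fun i => x (max (c i) T + s)) 𝒰 (𝓝 (z s)) :=
    fun s hs => (hz s).2.congr' (hG.mono fun i hi => (hi hs).symm)
  have hunif : ∀ S, TendstoUniformlyOn (fun i s => x (c i + s)) z 𝒰 (Icc 0 S) := fun S =>
    ((LipschitzOnWith.uniformEquicontinuousOn _ M fun i =>
      (hLip.comp_max_add (c i)).mono Icc_subset_Ici_self).equicontinuousOn
        |>.tendstoUniformlyOn_of_tendsto isCompact_Icc fun s hs => hGz s hs.1).congr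
      (hG.mono fun i hi => hi.mono Icc_subset_Ici_self)
  have hzc : ContinuousOn z (Ici 0) :=
    (LipschitzOnWith.of_tendsto (.of_forall fun i => hLip.comp_max_add (c i)) hGz).continuousOn
  have hzX : MapsTo z (Ici 0) X := fun s _ => hCX (hz s).1
  have hfz : ContinuousOn (fun s => f (z s) ubar) (Ici 0) :=
    hfc.comp (hzc.prodMk continuousOn_const) fun s hs => ⟨hzX hs, mem_univ _⟩
  have hzint : ∀ t ∈ Ici (0:ℝ), IntervalIntegrable (fun s => f (z s) ubar) volume 0 t :=
    fun t ht => (hfz.mono (by rw [uIcc_of_le ht]; exact Icc_subset_Ici_self)).intervalIntegrable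
  refine ⟨z, ⟨hzc, hzX, hzint, fun t ht => ?_⟩, (hz 0).1, hunif⟩
  exact hx.eq_add_integral_of_tendstoUniformlyOn hu hC hf hc ht (fun s _ => (hz s).1)
    (hzint t ht) (hunif t)

end IsSolOn

end Solutions

section TranslateLimits

variable {E : Type*} [PseudoMetricSpace E] {x : ℝ → E} {xbar : E} {P : (ℝ → E) → Prop}

theorem frequently_dist_lt_of_translate_limits
    (hlim : ∀ (𝒰 : Ultrafilter ℕ) (c : ℕ → ℝ), Tendsto c 𝒰 atTop →
      ∃ z, P z ∧ ∀ S, TendstoUniformlyOn (fun k s => x (c k + s)) z 𝒰 (Icc 0 S))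
    (hattr : ∀ z, P z → Tendsto z atTop (𝓝 xbar)) {η : ℝ} (hη : 0 < η) :
    ∃ᶠ t in atTop, dist (x t) xbar < η := by
  set 𝒰 := Ultrafilter.of (atTop : Filter ℕ)
  have hk : Tendsto (fun k : ℕ => (k : ℝ)) 𝒰 atTop :=
    tendsto_natCast_atTop_atTop.mono_left (Ultrafilter.of_le _)
  obtain ⟨z, hPz, hz⟩ := hlim 𝒰 _ hk
  obtain ⟨s, hsη, hs0⟩ :=
    ((hattr z hPz).eventually (ball_mem_nhds xbar hη)).and (eventually_ge_atTop 0) |>.exists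
  have hxs := (hz s).tendsto_at ⟨hs0, le_rfl⟩ |>.eventually (isOpen_ball.mem_nhds hsη)
  exact (tendsto_atTop_add_const_right _ s hk).frequently_map _ (fun _ h => h) hxs.frequently

theorem exists_excursion (hx : ContinuousOn x (Ici 0)) {δ ε : ℝ}
    (hnear : ∃ᶠ t in atTop, dist (x t) xbar < δ) (hfar : ∃ᶠ t in atTop, ε ≤ dist (x t) xbar)
    (hδε : δ < ε) {T : ℝ} (hT : 0 ≤ T) :
    ∃ c b : ℝ, T ≤ c ∧ c < b ∧ dist (x c) xbar ≤ δ ∧ ε ≤ dist (x b) xbar ∧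
      ∀ t ∈ Ioc c b, δ < dist (x t) xbar := by
  obtain ⟨a, hTa, ha⟩ := hnear.forall_exists_of_atTop T
  obtain ⟨b, hab, hb⟩ := hfar.forall_exists_of_atTop a
  obtain ⟨c, hc, hcδ, hcb⟩ := exists_last_le_of_lt hab
    ((continuous_id.dist continuous_const).comp_continuousOn
      (hx.mono fun t ht => hT.trans (hTa.trans ht.1)))
    ha.le (hδε.trans_le hb)
  exact ⟨c, b, hTa.trans hc.1, hc.2, hcδ, hb, hcb⟩

theorem tendsto_of_translate_limits (hx : ContinuousOn x (Ici 0))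
    (hlim : ∀ (𝒰 : Ultrafilter ℕ) (c : ℕ → ℝ), Tendsto c 𝒰 atTop →
      ∃ z, P z ∧ ∀ S, TendstoUniformlyOn (fun k s => x (c k + s)) z 𝒰 (Icc 0 S))
    (hattr : ∀ z, P z → Tendsto z atTop (𝓝 xbar))
    (hstab : ∀ ε > 0, ∃ δ > 0, ∀ z, P z → dist (z 0) xbar ≤ δ → ∀ t ≥ 0, dist (z t) xbar < ε) :
    Tendsto x atTop (𝓝 xbar) := by
  refine Metric.tendsto_nhds.2 fun ε hε => not_not.1 fun hbad => ?_
  simp only [not_eventually, not_lt] at hbad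
  obtain ⟨δ₀, hδ₀, hstab₀⟩ := hstab ε hε
  set δ := min δ₀ (ε / 2)
  have hδ : 0 < δ := lt_min hδ₀ (half_pos hε)
  have hδε : δ < ε := (min_le_right _ _).trans_lt (half_lt_self hε)
  have hexc (k : ℕ) := exists_excursion hx
    (frequently_dist_lt_of_translate_limits hlim hattr hδ) hbad hδε (Nat.cast_nonneg k)
  choose c b hkc hcb hcδ hbε hout using hexc
  set 𝒰 := Ultrafilter.of (atTop : Filter ℕ)
  have hc : Tendsto c 𝒰 atTop :=
    (tendsto_atTop_mono hkc tendsto_natCast_atTop_atTop).mono_left (Ultrafilter.of_le _)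
  obtain ⟨z, hPz, hz⟩ := hlim 𝒰 c hc
  have hz0 : dist (z 0) xbar ≤ δ :=
    le_of_tendsto (((hz 0).tendsto_at ⟨le_rfl, le_rfl⟩).dist tendsto_const_nhds)
      (.of_forall fun k => by simpa using hcδ k)
  have hzε := hstab₀ z hPz (hz0.trans (min_le_left _ _))
  by_cases hw : Tendsto (fun k => b k - c k) 𝒰 atTop
  · -- `z` never re-enters the open `δ`-ball
    obtain ⟨s, hsδ, hs0⟩ :=
      ((hattr z hPz).eventually (ball_mem_nhds xbar hδ)).and (eventually_gt_atTop 0) |>.exists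
    refine (not_le.2 (mem_ball.1 hsδ)) (ge_of_tendsto
      (((hz s).tendsto_at ⟨hs0.le, le_rfl⟩).dist tendsto_const_nhds) ?_)
    filter_upwards [hw.eventually_ge_atTop s] with k hk
    exact (hout k _ ⟨by linarith, by linarith⟩).le
  · -- `z` is at distance `≥ ε` from `x̄` at some time `τ`
    obtain ⟨S, hS⟩ : ∃ S, ∀ᶠ k in 𝒰, b k - c k < S := by
      simpa [Filter.tendsto_atTop, ← Ultrafilter.eventually_not] using hw
    obtain ⟨τ, hτ, hxτ⟩ := 𝒰.exists_tendsto_apply_of_tendstoUniformlyOn isCompact_Icc (hz S)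
      ((hc.eventually_ge_atTop 0).mono fun k hk => hx.comp (continuousOn_const.add continuousOn_id)
        fun s hs => mem_Ici.2 (add_nonneg hk hs.1))
      (hS.mono fun k hk => ⟨sub_nonneg.2 (hcb k).le, hk.le⟩)
    refine (hzε τ hτ.1).not_ge (ge_of_tendsto (hxτ.dist tendsto_const_nhds) ?_)
    exact .of_forall fun k => by simpa using hbε k

end TranslateLimits

theorem cics_bounded_trajectory_general {n : ℕ} {U : Type*} [MetricSpace U]
    (X : Set (EuclideanSpace ℝ (Fin n)))
    (f : EuclideanSpace ℝ (Fin n) → U → EuclideanSpace ℝ (Fin n))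
    (xbar : EuclideanSpace ℝ (Fin n)) (ubar : U)
    (O : Set (EuclideanSpace ℝ (Fin n)))
    -- the state space is open, contains the equilibrium, and `f(x̄, ū) = 0`
    (hX : IsOpen X)
    -- `f` is continuous, and locally Lipschitz in `x` uniformly on compacts of `U`
    (hfc : ContinuousOn (fun p : EuclideanSpace ℝ (Fin n) × U => f p.1 p.2)
      (X ×ˢ (univ : Set U)))
    (hflip : ∀ ξ ∈ X, ∀ K₀ : Set U, IsCompact K₀ → ∃ V ∈ 𝓝 ξ, ∃ L : ℝ,
      ∀ x ∈ V, ∀ z ∈ V, ∀ μ ∈ K₀, ‖f x μ - f z μ‖ ≤ L * ‖x - z‖)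
    -- `x̄` is a stable equilibrium of `ẋ = f(x, ū)` ...
    (hstab : ∀ ε > 0, ∃ δ > 0, ∀ ξ ∈ X, dist ξ xbar ≤ δ →
      ∃ y, IsSolOn X f (fun _ => ubar) y (Ici 0) ∧ y 0 = ξ ∧
        ∀ t ≥ (0:ℝ), dist (y t) xbar < ε)
    -- ... whose domain of attraction is `O`, a neighborhood of `x̄`
    (hO : O = {ξ | ∃ y, IsSolOn X f (fun _ => ubar) y (Ici 0) ∧ y 0 = ξ ∧
      Tendsto y atTop (𝓝 xbar)})
    (u : ℝ → U) (hulim : Tendsto u atTop (𝓝 ubar))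
    (x : ℝ → EuclideanSpace ℝ (Fin n)) (hx : IsSolOn X f u x (Ici 0))
    (hcpt : IsCompact (closure (x '' Ici 0)))
    (hclO : closure (x '' Ici 0) ⊆ O) :
    Tendsto x atTop (𝓝 xbar) := by
  have hL : LocallyLipschitzOn X (fun ξ => f ξ ubar) :=
    locallyLipschitzOn_of_norm_sub_le fun ξ hξ =>
      (hflip ξ hξ {ubar} isCompact_singleton).imp fun _ ⟨hV, L, hLV⟩ =>
        ⟨hV, L, fun a ha b hb => hLV a ha b hb ubar rfl⟩
  have hOX : O ⊆ X := by
    rw [hO]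
    rintro ξ ⟨y, hy, rfl, -⟩
    exact hy.2.1 0 self_mem_Ici
  refine tendsto_of_translate_limits (P := fun z => IsSolOn X f (fun _ => ubar) z (Ici 0) ∧
    z 0 ∈ closure (x '' Ici 0)) hx.1 (fun 𝒰 c hc => ?_) (fun z ⟨hz, hz0⟩ => ?_) fun ε hε => ?_
  · obtain ⟨z, hz, hz0, hxz⟩ := hx.exists_tendstoUniformlyOn_translate hX hfc hulim hcpt
      (hclO.trans hOX) (fun t ht => subset_closure (mem_image_of_mem x ht)) 𝒰 hc
    exact ⟨z, ⟨hz, hz0⟩, hxz⟩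
  · obtain ⟨y, hy, hy0, hyx⟩ : z 0 ∈ {ξ | _} := hO ▸ hclO hz0
    exact hyx.congr' ((eventually_ge_atTop 0).mono fun t ht =>
      hy.eqOn_of_apply_zero_eq_s2 hL hz hy0 ht)
  · obtain ⟨δ, hδ, hstabδ⟩ := hstab ε hε
    refine ⟨δ, hδ, fun z ⟨hz, _⟩ hz0 t ht => ?_⟩
    obtain ⟨y, hy, hy0, hyε⟩ := hstabδ (z 0) (hz.2.1 0 self_mem_Ici) hz0
    exact hy.eqOn_of_apply_zero_eq_s2 hL hz hy0 ht ▸ hyε t ht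

/-- If `u(t) → ū` and `x(·)` is a solution of `ẋ = f(x, u)` on `[0,∞)` whose
image has compact closure contained in the domain of attraction `O`, then
`x(t) → x̄` as `t → ∞`. -/
theorem cics_bounded_trajectory {n : ℕ} {U : Type*} [MetricSpace U]
    (X : Set (EuclideanSpace ℝ (Fin n)))
    (f : EuclideanSpace ℝ (Fin n) → U → EuclideanSpace ℝ (Fin n))
    (xbar : EuclideanSpace ℝ (Fin n)) (ubar : U)
    (O : Set (EuclideanSpace ℝ (Fin n)))
    -- the state space is open, contains the equilibrium, and `f(x̄, ū) = 0`
    (hX : IsOpen X) (hxbar : xbar ∈ X) (heq : f xbar ubar = 0)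
    -- `f` is continuous, and locally Lipschitz in `x` uniformly on compacts of `U`
    (hfc : ContinuousOn (fun p : EuclideanSpace ℝ (Fin n) × U => f p.1 p.2)
      (X ×ˢ (univ : Set U)))
    (hflip : ∀ ξ ∈ X, ∀ K₀ : Set U, IsCompact K₀ → ∃ V ∈ 𝓝 ξ, ∃ L : ℝ,
      ∀ x ∈ V, ∀ z ∈ V, ∀ μ ∈ K₀, ‖f x μ - f z μ‖ ≤ L * ‖x - z‖)
    -- `x̄` is a stable equilibrium of `ẋ = f(x, ū)` ...
    (hstab : ∀ ε > 0, ∃ δ > 0, ∀ ξ ∈ X, dist ξ xbar ≤ δ →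
      ∃ y, IsSolOn X f (fun _ => ubar) y (Ici 0) ∧ y 0 = ξ ∧
        ∀ t ≥ (0:ℝ), dist (y t) xbar < ε)
    -- ... whose domain of attraction is `O`, a neighborhood of `x̄`
    (hO : O = {ξ | ∃ y, IsSolOn X f (fun _ => ubar) y (Ici 0) ∧ y 0 = ξ ∧
      Tendsto y atTop (𝓝 xbar)})
    (hOnhd : O ∈ 𝓝 xbar)
    (u : ℝ → U) (hu : IsInput u) (hulim : Tendsto u atTop (𝓝 ubar))
    (x : ℝ → EuclideanSpace ℝ (Fin n)) (hx : IsSolOn X f u x (Ici 0))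
    (hcpt : IsCompact (closure (x '' Ici 0)))
    (hclO : closure (x '' Ici 0) ⊆ O) :
    Tendsto x atTop (𝓝 xbar) :=
  cics_bounded_trajectory_general X f xbar ubar O hX hfc hflip hstab hO u hulim x hx hcpt hclO
end
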